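/- arXiv:1110.3079 — 11 statements merged into one kernel-verified Lean document; each statement's English description precedes it below -/
import Mathlib

section
/- Let (X,d,≤) be a partially ordered metric space with d complete, and let T : X → X be an increasing self-map (x ≤ y implies Tx ≤ Ty) such that the set X(T,≤) = {x ∈ X : x ≤ Tx} is nonempty and there exists α ∈ (0,1) with d(Tx,Ty) ≤ α·d(x,y) for all x,y ∈ X with x ≤ y. If either T is d-continuous or (≤) is d-self-closed, then T is a Picard operator modulo (d,≤): for every x ∈ X with x ≤ Tx, the orbit (Tⁿx)ₙ d-converges and its limit is a fixed point of T. -/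
open Filter Topology

/-- Nieto–Rodriguez-Lopez: in a complete partially ordered metric space, an increasing
map which is contractive on comparable pairs and satisfies a continuity or self-closedness
condition is a Picard operator modulo (d,≤). -/
theorem stmt0 {X : Type*} [MetricSpace X] [PartialOrder X] [CompleteSpace X]
    (T : X → X)
    (hmono : ∀ x y : X, x ≤ y → T x ≤ T y)
    (hne : ∃ x : X, x ≤ T x)
    (α : ℝ) (hα0 : 0 < α) (hα1 : α < 1)
    (hcontr : ∀ x y : X, x ≤ y → dist (T x) (T y) ≤ α * dist x y)
    (hcc : Continuous T ∨
      (∀ (u : ℕ → X) (x : X), (∀ n m : ℕ, n ≤ m → u n ≤ u m) →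
        Tendsto u atTop (𝓝 x) → ∀ n, u n ≤ x)) :
    ∀ x : X, x ≤ T x →
      ∃ z : X, Tendsto (fun n => T^[n] x) atTop (𝓝 z) ∧ T z = z := by
  intro x hx
  set u : ℕ → X := fun n => T^[n] x with hu
  have hstep : ∀ n, u (n + 1) = T (u n) := by
    intro n; simp [hu, Function.iterate_succ_apply']
  have hchain : ∀ n, u n ≤ u (n + 1) := by
    intro n
    induction n with
    | zero => simpa [hu] using hx
    | succ k ih => rw [hstep, hstep]; exact hmono _ _ ih
  have hmonoSeq : Monotone u := monotone_nat_of_le_succ hchain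
  have hgeo : ∀ n, dist (u n) (u (n + 1)) ≤ dist x (T x) * α ^ n := by
    intro n
    induction n with
    | zero => simp [hu]
    | succ k ih =>
      rw [hstep, hstep]
      calc dist (T (u k)) (T (u (k + 1))) ≤ α * dist (u k) (u (k + 1)) :=
            hcontr _ _ (hchain k)
        _ ≤ α * (dist x (T x) * α ^ k) := by
            exact mul_le_mul_of_nonneg_left ih hα0.le
        _ = dist x (T x) * α ^ (k + 1) := by ring
  have hcauchy : CauchySeq u :=
    cauchySeq_of_le_geometric α (dist x (T x)) hα1 hgeo
  obtain ⟨z, hz⟩ := cauchySeq_tendsto_of_complete hcauchy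
  refine ⟨z, hz, ?_⟩
  have hsucc : Tendsto (fun n => u (n + 1)) atTop (𝓝 z) :=
    hz.comp (tendsto_add_atTop_nat 1)
  rcases hcc with hcont | hsc
  · have : Tendsto (fun n => T (u n)) atTop (𝓝 (T z)) :=
      (hcont.tendsto z).comp hz
    have h2 : Tendsto (fun n => u (n + 1)) atTop (𝓝 (T z)) := by
      simpa [hstep] using this
    exact tendsto_nhds_unique h2 hsucc
  · have hub : ∀ n, u n ≤ z := hsc u z (fun n m h => hmonoSeq h) hz
    have : Tendsto (fun n => T (u n)) atTop (𝓝 (T z)) := by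
      rw [tendsto_iff_dist_tendsto_zero]
      have h0 : Tendsto (fun n => α * dist (u n) z) atTop (𝓝 (α * 0)) :=
        (tendsto_const_nhds.mul
          ((tendsto_iff_dist_tendsto_zero.mp hz)))
      rw [mul_zero] at h0
      refine squeeze_zero (fun n => dist_nonneg) (fun n => hcontr _ _ (hub n)) h0
    have h2 : Tendsto (fun n => u (n + 1)) atTop (𝓝 (T z)) := by
      simpa [hstep] using this
    exact (tendsto_nhds_unique h2 hsucc).symm ▸ rfl
end

section
/- Let (X,d,≤) be a partially ordered metric space with d complete, and let T : X → X be an increasing self-map such that X(T,≤) = {x ∈ X : x ≤ Tx} is nonempty and there exists α ∈ (0,1) with d(Tx,Ty) ≤ α·d(x,y) for all x ≤ y. Suppose that either T is d-continuous or (≤) is d-self-closed, and that for every x,y ∈ X the pair {x,y} has both a lower bound and an upper bound in X. Then T is a strong Picard operator modulo (d,≤): for every x ∈ X the orbit (Tⁿx)ₙ d-converges to a fixed point of T, and T has exactly one fixed point. -/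
/-!
Along a chain the map contracts: for `a ≤ b` the iterates stay ordered and
`dist (Tⁿ a) (Tⁿ b) ≤ αⁿ dist a b`. Hence the orbit of a point `x₀ ≤ T x₀` is increasing and
Cauchy, and its limit `z` is fixed, by continuity of `T` or, if the order is self-closed, because
`Tⁿ x₀ ≤ z` lets the contraction estimate pass to the limit. For any `x`, a common upper bound
`u` of `x` and `z` gives `dist (Tⁿ x) z ≤ dist (Tⁿ x) (Tⁿ u) + dist (Tⁿ z) (Tⁿ u) → 0`, so every
orbit converges to `z`, and in particular no other fixed point exists.
-/

open Filter Topology Function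

section OrderedContraction

variable {X : Type*} [PseudoMetricSpace X] [Preorder X] {T : X → X} {α : ℝ}

theorem dist_iterate_le_of_le (hα0 : 0 ≤ α) (hmono : Monotone T)
    (hcontr : ∀ x y : X, x ≤ y → dist (T x) (T y) ≤ α * dist x y)
    {a b : X} (hab : a ≤ b) (n : ℕ) :
    dist (T^[n] a) (T^[n] b) ≤ α ^ n * dist a b := by
  induction n with
  | zero => simp
  | succ n ih =>
    rw [iterate_succ_apply', iterate_succ_apply']
    calc dist (T (T^[n] a)) (T (T^[n] b)) ≤ α * dist (T^[n] a) (T^[n] b) :=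
          hcontr _ _ (hmono.iterate n hab)
      _ ≤ α * (α ^ n * dist a b) := mul_le_mul_of_nonneg_left ih hα0
      _ = α ^ (n + 1) * dist a b := by ring

theorem tendsto_dist_iterate_of_le (hα0 : 0 ≤ α) (hα1 : α < 1) (hmono : Monotone T)
    (hcontr : ∀ x y : X, x ≤ y → dist (T x) (T y) ≤ α * dist x y)
    {a b : X} (hab : a ≤ b) :
    Tendsto (fun n => dist (T^[n] a) (T^[n] b)) atTop (𝓝 0) := by
  refine squeeze_zero (fun _ => dist_nonneg) (dist_iterate_le_of_le hα0 hmono hcontr hab) ?_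
  simpa using (tendsto_pow_atTop_nhds_zero_of_lt_one hα0 hα1).mul_const (dist a b)

theorem cauchySeq_iterate_of_le_map (hα0 : 0 ≤ α) (hα1 : α < 1) (hmono : Monotone T)
    (hcontr : ∀ x y : X, x ≤ y → dist (T x) (T y) ≤ α * dist x y)
    {x₀ : X} (hx₀ : x₀ ≤ T x₀) :
    CauchySeq fun n => T^[n] x₀ := by
  refine cauchySeq_of_le_geometric α (dist x₀ (T x₀)) hα1 fun n => ?_
  rw [iterate_succ_apply, mul_comm]
  exact dist_iterate_le_of_le hα0 hmono hcontr hx₀ n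

theorem isFixedPt_of_tendsto_iterate_of_le [T2Space X]
    (hcontr : ∀ x y : X, x ≤ y → dist (T x) (T y) ≤ α * dist x y)
    {x z : X} (hz : Tendsto (fun n => T^[n] x) atTop (𝓝 z)) (hle : ∀ n, T^[n] x ≤ z) :
    IsFixedPt T z := by
  have hTz : Tendsto (fun n => T^[n + 1] x) atTop (𝓝 (T z)) := by
    refine tendsto_iff_dist_tendsto_zero.2 <|
      squeeze_zero (fun _ => dist_nonneg) (fun n => ?_) (g := fun n => α * dist (T^[n] x) z) ?_
    · rw [iterate_succ_apply']
      exact hcontr _ _ (hle n)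
    · simpa using (tendsto_iff_dist_tendsto_zero.1 hz).const_mul α
  exact tendsto_nhds_unique hTz (hz.comp (tendsto_add_atTop_nat 1))

theorem tendsto_iterate_of_isFixedPt_of_le (hα0 : 0 ≤ α) (hα1 : α < 1) (hmono : Monotone T)
    (hcontr : ∀ x y : X, x ≤ y → dist (T x) (T y) ≤ α * dist x y)
    {x z u : X} (hz : IsFixedPt T z) (hxu : x ≤ u) (hzu : z ≤ u) :
    Tendsto (fun n => T^[n] x) atTop (𝓝 z) := by
  have hsum := (tendsto_dist_iterate_of_le hα0 hα1 hmono hcontr hxu).add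
    (tendsto_dist_iterate_of_le hα0 hα1 hmono hcontr hzu)
  rw [add_zero] at hsum
  refine tendsto_iff_dist_tendsto_zero.2 <|
    squeeze_zero (fun _ => dist_nonneg) (fun n => ?_) hsum
  calc dist (T^[n] x) z = dist (T^[n] x) (T^[n] z) := by rw [(hz.iterate n).eq]
    _ ≤ dist (T^[n] x) (T^[n] u) + dist (T^[n] z) (T^[n] u) := dist_triangle_right _ _ _

end OrderedContraction

/-- Ran–Reurings: with the additional hypothesis that every pair has a lower and
an upper bound, the map is a strong Picard operator modulo (d,≤). -/
theorem stmt1 {X : Type*} [MetricSpace X] [PartialOrder X] [CompleteSpace X]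
    (T : X → X)
    (hmono : ∀ x y : X, x ≤ y → T x ≤ T y)
    (hne : ∃ x : X, x ≤ T x)
    (α : ℝ) (hα0 : 0 < α) (hα1 : α < 1)
    (hcontr : ∀ x y : X, x ≤ y → dist (T x) (T y) ≤ α * dist x y)
    (hcc : Continuous T ∨
      (∀ (u : ℕ → X) (x : X), (∀ n m : ℕ, n ≤ m → u n ≤ u m) →
        Tendsto u atTop (𝓝 x) → ∀ n, u n ≤ x))
    (hbounds : ∀ x y : X, (∃ l : X, l ≤ x ∧ l ≤ y) ∧ (∃ u : X, x ≤ u ∧ y ≤ u)) :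
    ∃ z : X, T z = z ∧ (∀ w : X, T w = w → w = z) ∧
      ∀ x : X, Tendsto (fun n => T^[n] x) atTop (𝓝 z) := by
  have hT : Monotone T := hmono
  obtain ⟨x₀, hx₀⟩ := hne
  obtain ⟨z, hz⟩ := cauchySeq_tendsto_of_complete
    (cauchySeq_iterate_of_le_map hα0.le hα1 hT hcontr hx₀)
  have hTz : IsFixedPt T z := by
    rcases hcc with hcont | hclosed
    · exact isFixedPt_of_tendsto_iterate hz hcont.continuousAt
    · exact isFixedPt_of_tendsto_iterate_of_le hcontr hz
        (hclosed _ z (fun _ _ h => hT.monotone_iterate_of_le_map hx₀ h) hz)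
  have hconv (x : X) : Tendsto (fun n => T^[n] x) atTop (𝓝 z) := by
    obtain ⟨u, hxu, hzu⟩ := (hbounds x z).2
    exact tendsto_iterate_of_isFixedPt_of_le hα0.le hα1 hT hcontr hTz hxu hzu
  refine ⟨z, hTz, fun w hw => ?_, hconv⟩
  simpa only [iterate_fixed hw, tendsto_const_nhds_iff] using hconv w
end

section
/- Let A = (a_{ij}) be an n×n real matrix with nonnegative entries. Define a_{ij}^{(1)} = 1 − a_{ij} if i = j and a_{ij}^{(1)} = a_{ij} if i ≠ j (for 1 ≤ i,j ≤ n), and inductively, for 1 ≤ k ≤ n−1 and k+1 ≤ i,j ≤ n, set a_{ij}^{(k+1)} = a_{kk}^{(k)}·a_{ij}^{(k)} − a_{ik}^{(k)}·a_{kj}^{(k)} if i = j, and a_{ij}^{(k+1)} = a_{kk}^{(k)}·a_{ij}^{(k)} + a_{ik}^{(k)}·a_{kj}^{(k)} if i ≠ j. Then A is normal if and only if a_{ii}^{(i)} > 0 for every i ∈ {1,...,n}. -/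
open Matrix

/-- The Matkowski elimination scheme: `matkSeq A k` is the matrix `a^{(k+1)}`
(so that `matkSeq A 0 = a^{(1)}`), where the step from `a^{(k)}` to `a^{(k+1)}`
uses the pivot with (1-based) index `k`, i.e. (0-based) index `k-1`. -/
noncomputable def matkSeq {n : ℕ} (A : Matrix (Fin n) (Fin n) ℝ) :
    ℕ → Matrix (Fin n) (Fin n) ℝ
  | 0 => fun i j => if i = j then 1 - A i j else A i j
  | (k + 1) => fun i j =>
      if h : k < n then
        let p : Fin n := ⟨k, h⟩
        if i = j then
          matkSeq A k p p * matkSeq A k i j - matkSeq A k i p * matkSeq A k p j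
        else
          matkSeq A k p p * matkSeq A k i j + matkSeq A k i p * matkSeq A k p j
      else matkSeq A k i j

noncomputable def Mk {n : ℕ} (A : Matrix (Fin n) (Fin n) ℝ) (k : ℕ) (i j : Fin n) : ℝ :=
  if i = j then matkSeq A k i j else -(matkSeq A k i j)

lemma Mk_diag {n : ℕ} (A : Matrix (Fin n) (Fin n) ℝ) (k : ℕ) (i : Fin n) :
    Mk A k i i = matkSeq A k i i := if_pos rfl

lemma Mk_off {n : ℕ} (A : Matrix (Fin n) (Fin n) ℝ) (k : ℕ) {i j : Fin n} (h : i ≠ j) :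
    Mk A k i j = -(matkSeq A k i j) := if_neg h

lemma matkSeq_succ {n : ℕ} (A : Matrix (Fin n) (Fin n) ℝ) (k : ℕ) (h : k < n) (i j : Fin n) :
    matkSeq A (k + 1) i j =
      if i = j then
        matkSeq A k ⟨k, h⟩ ⟨k, h⟩ * matkSeq A k i j - matkSeq A k i ⟨k, h⟩ * matkSeq A k ⟨k, h⟩ j
      else
        matkSeq A k ⟨k, h⟩ ⟨k, h⟩ * matkSeq A k i j + matkSeq A k i ⟨k, h⟩ * matkSeq A k ⟨k, h⟩ j := by
  simp only [matkSeq, dif_pos h]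

lemma Mk_succ {n : ℕ} (A : Matrix (Fin n) (Fin n) ℝ) (k : ℕ) (h : k < n) (i j : Fin n)
    (hi : k + 1 ≤ (i : ℕ)) (hj : k + 1 ≤ (j : ℕ)) :
    Mk A (k + 1) i j =
      Mk A k ⟨k, h⟩ ⟨k, h⟩ * Mk A k i j - Mk A k i ⟨k, h⟩ * Mk A k ⟨k, h⟩ j := by
  have hip : i ≠ ⟨k, h⟩ := Fin.ne_of_val_ne (by simp only [Fin.val_mk]; omega)
  have hpj : (⟨k, h⟩ : Fin n) ≠ j := Fin.ne_of_val_ne (by simp only [Fin.val_mk]; omega)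
  by_cases hij : i = j
  · subst hij
    rw [Mk_diag, matkSeq_succ A k h, if_pos rfl, Mk_diag, Mk_diag, Mk_off A k hip,
      Mk_off A k hpj]
    ring
  · rw [Mk_off A (k+1) hij, matkSeq_succ A k h, if_neg hij, Mk_diag, Mk_off A k hij,
      Mk_off A k hip, Mk_off A k hpj]
    ring

lemma matk_nonneg {n : ℕ} (A : Matrix (Fin n) (Fin n) ℝ) (hA : ∀ i j, 0 ≤ A i j) :
    ∀ k : ℕ, (∀ m : Fin n, (m : ℕ) < k → 0 < matkSeq A (m : ℕ) m m) →
    ∀ i j : Fin n, k ≤ (i : ℕ) → k ≤ (j : ℕ) → i ≠ j → 0 ≤ matkSeq A k i j := by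
  intro k
  induction k with
  | zero =>
    intro _ i j _ _ hij
    simp only [matkSeq, if_neg hij]
    exact hA i j
  | succ k ih =>
    intro hpiv i j hi hj hij
    have hk : k < n := by have := i.isLt; omega
    have hip : i ≠ ⟨k, hk⟩ := Fin.ne_of_val_ne (by simp only [Fin.val_mk]; omega)
    have hpj : (⟨k, hk⟩ : Fin n) ≠ j := Fin.ne_of_val_ne (by simp only [Fin.val_mk]; omega)
    have hP : 0 < matkSeq A k ⟨k, hk⟩ ⟨k, hk⟩ := by
      have := hpiv ⟨k, hk⟩ (by simp)
      simpa using this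
    have h1 : 0 ≤ matkSeq A k i j :=
      ih (fun m hm => hpiv m (Nat.lt_succ_of_lt hm)) i j (by omega) (by omega) hij
    have h2 : 0 ≤ matkSeq A k i ⟨k, hk⟩ :=
      ih (fun m hm => hpiv m (Nat.lt_succ_of_lt hm)) i ⟨k, hk⟩ (by omega) (by simp) hip
    have h3 : 0 ≤ matkSeq A k ⟨k, hk⟩ j :=
      ih (fun m hm => hpiv m (Nat.lt_succ_of_lt hm)) ⟨k, hk⟩ j (by simp) (by omega) hpj
    rw [matkSeq_succ A k hk, if_neg hij]
    positivity

lemma mainAux {n : ℕ} (A : Matrix (Fin n) (Fin n) ℝ) (hA : ∀ i j, 0 ≤ A i j) :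
    ∀ d k : ℕ, n ≤ k + d →
      (∀ m : Fin n, (m : ℕ) < k → 0 < matkSeq A (m : ℕ) m m) →
      ((∃ z : Fin n → ℝ, (∀ i : Fin n, k ≤ (i : ℕ) → 0 < z i) ∧
          ∀ i : Fin n, k ≤ (i : ℕ) →
            0 < ∑ j ∈ Finset.univ.filter (fun j : Fin n => k ≤ (j : ℕ)), Mk A k i j * z j) ↔
        ∀ i : Fin n, k ≤ (i : ℕ) → 0 < matkSeq A (i : ℕ) i i) := by
  intro d
  induction d with
  | zero =>
    intro k hkd _
    have htriv : ∀ i : Fin n, ¬ (k ≤ (i : ℕ)) := fun i => by have := i.isLt; omega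
    constructor
    · intro _ i hi; exact absurd hi (htriv i)
    · intro _; exact ⟨fun _ => 1, fun i hi => absurd hi (htriv i), fun i hi => absurd hi (htriv i)⟩
  | succ d ih =>
    intro k hkd H
    by_cases hk : n ≤ k
    · have htriv : ∀ i : Fin n, ¬ (k ≤ (i : ℕ)) := fun i => by have := i.isLt; omega
      constructor
      · intro _ i hi; exact absurd hi (htriv i)
      · intro _; exact ⟨fun _ => 1, fun i hi => absurd hi (htriv i), fun i hi => absurd hi (htriv i)⟩
    push_neg at hk
    set p : Fin n := ⟨k, hk⟩ with hp
    have hpval : (p : ℕ) = k := rfl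
    set Fk := Finset.univ.filter (fun j : Fin n => k ≤ (j : ℕ)) with hFk
    set Fk1 := Finset.univ.filter (fun j : Fin n => k + 1 ≤ (j : ℕ)) with hFk1
    have hmem1 : ∀ j : Fin n, j ∈ Fk1 ↔ k + 1 ≤ (j : ℕ) := by
      intro j; simp [hFk1]
    have hsplit : Fk = insert p Fk1 := by
      ext j
      simp only [hFk, hFk1, Finset.mem_insert, Finset.mem_filter, Finset.mem_univ, true_and,
        Fin.ext_iff, hpval]
      omega
    have hpF : p ∉ Fk1 := by rw [hmem1]; omega
    have H' : 0 < matkSeq A k p p →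
        ∀ m : Fin n, (m : ℕ) < k + 1 → 0 < matkSeq A (m : ℕ) m m := by
      intro hP m hm
      by_cases hmk : (m : ℕ) = k
      · have : m = p := Fin.ext (by simpa [hpval] using hmk)
        subst this
        simpa [hpval] using hP
      · exact H m (by omega)
    have hoff : ∀ i j : Fin n, k ≤ (i : ℕ) → k ≤ (j : ℕ) → i ≠ j → Mk A k i j ≤ 0 := by
      intro i j hi hj hij
      rw [Mk_off A k hij]
      have := matk_nonneg A hA k H i j hi hj hij
      linarith
    -- key identity
    have hkey : ∀ z : Fin n → ℝ, ∀ i : Fin n, k + 1 ≤ (i : ℕ) →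
        ∑ j ∈ Fk1, Mk A (k + 1) i j * z j =
          Mk A k p p * (∑ j ∈ Fk1, Mk A k i j * z j) -
            Mk A k i p * (∑ j ∈ Fk1, Mk A k p j * z j) := by
      intro z i hi
      rw [Finset.mul_sum, Finset.mul_sum, ← Finset.sum_sub_distrib]
      refine Finset.sum_congr rfl ?_
      intro j hj
      rw [Mk_succ A k hk i j hi ((hmem1 j).1 hj)]
      ring
    constructor
    · rintro ⟨z, hz, hrow⟩
      have hzp : 0 < z p := hz p (by omega)
      have hrsplit : ∀ i : Fin n, ∑ j ∈ Fk, Mk A k i j * z j =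
          Mk A k i p * z p + ∑ j ∈ Fk1, Mk A k i j * z j := by
        intro i; rw [hsplit, Finset.sum_insert hpF]
      have hup : (∑ j ∈ Fk1, Mk A k p j * z j) ≤ 0 := by
        refine Finset.sum_nonpos ?_
        intro j hj
        have hj1 := (hmem1 j).1 hj
        have hpj : p ≠ j := Fin.ne_of_val_ne (by omega)
        exact mul_nonpos_of_nonpos_of_nonneg (hoff p j (by omega) (by omega) hpj)
          (hz j (by omega)).le
      have hrp : 0 < ∑ j ∈ Fk, Mk A k p j * z j := hrow p (by omega)
      have hPzp : 0 < Mk A k p p * z p := by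
        have := hrsplit p
        linarith [hrp, hup]
      have hP : 0 < matkSeq A k p p := by
        rw [← Mk_diag]
        by_contra hc
        push_neg at hc
        linarith [mul_nonpos_of_nonpos_of_nonneg hc hzp.le]
      have hnext := (ih (k + 1) (by omega) (H' hP)).mp ?_
      · intro i hi
        by_cases hik : (i : ℕ) = k
        · have : i = p := Fin.ext (by simpa [hpval] using hik)
          subst this
          simpa [hpval] using hP
        · exact hnext i (by omega)
      · refine ⟨z, fun i hi => hz i (by omega), ?_⟩
        intro i hi
        rw [hkey z i hi]
        have ht : ∑ j ∈ Fk1, Mk A k i j * z j =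
            (∑ j ∈ Fk, Mk A k i j * z j) - Mk A k i p * z p := by
          rw [hrsplit i]; ring
        have htp : ∑ j ∈ Fk1, Mk A k p j * z j =
            (∑ j ∈ Fk, Mk A k p j * z j) - Mk A k p p * z p := by
          rw [hrsplit p]; ring
        rw [ht, htp]
        have hri : 0 < ∑ j ∈ Fk, Mk A k i j * z j := hrow i (by omega)
        have hip : i ≠ p := Fin.ne_of_val_ne (by omega)
        have hMip : Mk A k i p ≤ 0 := hoff i p (by omega) (by omega) hip
        have h1 : 0 < Mk A k p p := by rw [Mk_diag]; exact hP
        nlinarith [mul_nonneg (neg_nonneg.2 hMip) hrp.le, mul_pos h1 hri]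
    · intro hpiv
      have hP : 0 < matkSeq A k p p := by
        have := hpiv p (by omega)
        simpa [hpval] using this
      obtain ⟨z, hz, hs⟩ := (ih (k + 1) (by omega) (H' hP)).mpr (fun i hi => hpiv i (by omega))
      set s : Fin n → ℝ := fun i => ∑ j ∈ Fk1, Mk A (k + 1) i j * z j with hsdef
      set t : Fin n → ℝ := fun i => ∑ j ∈ Fk1, Mk A k i j * z j with htdef
      have hkey2 : ∀ i : Fin n, k + 1 ≤ (i : ℕ) →
          s i = Mk A k p p * t i - Mk A k i p * t p := hkey z
      have hu : t p ≤ 0 := by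
        refine Finset.sum_nonpos ?_
        intro j hj
        have hj1 := (hmem1 j).1 hj
        have hpj : p ≠ j := Fin.ne_of_val_ne (by omega)
        exact mul_nonpos_of_nonpos_of_nonneg (hoff p j (by omega) (by omega) hpj)
          (hz j (by omega)).le
      set C : ℝ := 1 + ∑ i ∈ Fk1, (-(Mk A k i p)) with hCdef
      have hterm : ∀ i ∈ Fk1, 0 ≤ -(Mk A k i p) := by
        intro i hi
        have hi1 := (hmem1 i).1 hi
        have hip : i ≠ p := Fin.ne_of_val_ne (by omega)
        linarith [hoff i p (by omega) (by omega) hip]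
      have hC : 0 < C := by
        have := Finset.sum_nonneg hterm
        rw [hCdef]; linarith
      have hC1 : ∀ i ∈ Fk1, -(Mk A k i p) ≤ C - 1 := by
        intro i hi
        have := Finset.single_le_sum hterm hi
        rw [hCdef]; linarith
      have hspos : ∀ i ∈ Fk1, 0 < s i := fun i hi => hs i ((hmem1 i).1 hi)
      obtain ⟨ε, hε, hεle⟩ : ∃ ε : ℝ, 0 < ε ∧ ∀ i ∈ Fk1, ε ≤ s i / C := by
        by_cases hne : Fk1.Nonempty
        · refine ⟨min 1 (Fk1.inf' hne (fun i => s i / C)), ?_, ?_⟩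
          · refine lt_min one_pos ?_
            rw [Finset.lt_inf'_iff]
            exact fun i hi => div_pos (hspos i hi) hC
          · intro i hi
            exact le_trans (min_le_right _ _) (Finset.inf'_le _ hi)
        · exact ⟨1, one_pos, fun i hi => absurd ⟨i, hi⟩ hne⟩
      set w : ℝ := (ε - t p) / matkSeq A k p p with hwdef
      have hw : 0 < w := div_pos (by linarith) hP
      have hPw : matkSeq A k p p * w = ε - t p := by
        rw [hwdef, mul_div_cancel₀ _ hP.ne']
      set z' : Fin n → ℝ := Function.update z p w with hz'def
      have hz'p : z' p = w := Function.update_self p w z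
      have hz'ne : ∀ j : Fin n, j ≠ p → z' j = z j := fun j hj => Function.update_of_ne hj w z
      have htz' : ∀ i : Fin n, ∑ j ∈ Fk1, Mk A k i j * z' j = t i := by
        intro i
        rw [htdef]
        refine Finset.sum_congr rfl ?_
        intro j hj
        have hj1 := (hmem1 j).1 hj
        rw [hz'ne j (Fin.ne_of_val_ne (by omega))]
      refine ⟨z', ?_, ?_⟩
      · intro i hi
        by_cases hip : i = p
        · rw [hip, hz'p]; exact hw
        · rw [hz'ne i hip]
          have : (i : ℕ) ≠ k := fun hc => hip (Fin.ext (by simpa [hpval] using hc))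
          exact hz i (by omega)
      · intro i hi
        rw [hsplit, Finset.sum_insert hpF, htz' i, hz'p]
        by_cases hip : i = p
        · subst hip
          rw [Mk_diag, hPw]
          linarith
        · have hik1 : k + 1 ≤ (i : ℕ) := by
            have : (i : ℕ) ≠ k := fun hc => hip (Fin.ext (by simpa [hpval] using hc))
            omega
          have hsi : 0 < s i := hs i hik1
          have hMip : Mk A k i p ≤ 0 := hoff i p (by omega) (by omega) (by exact hip)
          have hkey2i := hkey2 i hik1
          have hεi : ε ≤ s i / C := hεle i ((hmem1 i).2 hik1)
          have hbound : (-(Mk A k i p)) * ε < s i := by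
            have h1 : (-(Mk A k i p)) * ε ≤ (C - 1) * (s i / C) := by
              refine mul_le_mul (hC1 i ((hmem1 i).2 hik1)) hεi hε.le ?_
              have hsum := Finset.sum_nonneg hterm
              simp only [hCdef]
              linarith
            have h2 : (C - 1) * (s i / C) < C * (s i / C) :=
              mul_lt_mul_of_pos_right (by linarith) (div_pos hsi hC)
            have h3 : C * (s i / C) = s i := mul_div_cancel₀ _ hC.ne'
            linarith
          have hval : (Mk A k i p * w + t i) * matkSeq A k p p = s i + Mk A k i p * ε := by
            have hPd : Mk A k p p = matkSeq A k p p := Mk_diag A k p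
            rw [← hPd] at hPw ⊢
            linear_combination Mk A k i p * hPw - hkey2i
          nlinarith [hval, hP]


/-- Matkowski's characterization: a nonnegative matrix `A` is normal (there is a
componentwise strictly positive vector `z` with `A z < z` componentwise) iff
`a^{(i)}_{ii} > 0` for all `i = 1, …, n`. -/
theorem stmt2 {n : ℕ} (A : Matrix (Fin n) (Fin n) ℝ)
    (hA : ∀ i j, 0 ≤ A i j) :
    (∃ z : Fin n → ℝ, (∀ i, 0 < z i) ∧ ∀ i, A.mulVec z i < z i) ↔
      (∀ i : Fin n, 0 < matkSeq A (i : ℕ) i i) := by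
  have hmain := mainAux A hA n 0 (by omega) (fun m hm => absurd hm (by omega))
  have hF0 : Finset.univ.filter (fun j : Fin n => 0 ≤ (j : ℕ)) = Finset.univ := by simp
  have hsum : ∀ (z : Fin n → ℝ) (i : Fin n),
      ∑ j ∈ Finset.univ.filter (fun j : Fin n => 0 ≤ (j : ℕ)), Mk A 0 i j * z j
        = z i - A.mulVec z i := by
    intro z i
    rw [hF0]
    have key : ∀ j : Fin n, Mk A 0 i j * z j = (if i = j then z j else 0) - A i j * z j := by
      intro j
      by_cases hij : i = j
      · subst hij; simp [Mk, matkSeq]; try ring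
      · simp [Mk, matkSeq, hij]; try ring
    rw [Finset.sum_congr rfl (fun j _ => key j), Finset.sum_sub_distrib, Finset.sum_ite_eq]
    simp [mulVec, dotProduct]
  constructor
  · rintro ⟨z, hz, hlt⟩
    intro i
    refine (hmain.mp ⟨z, fun i _ => hz i, fun i _ => ?_⟩) i (Nat.zero_le _)
    rw [hsum z i]; linarith [hlt i]
  · intro hp
    obtain ⟨z, hz, hrow⟩ := hmain.mpr (fun i _ => hp i)
    refine ⟨z, fun i => hz i (Nat.zero_le _), fun i => ?_⟩
    have := hrow i (Nat.zero_le _)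
    rw [hsum z i] at this
    linarith
end

section
/- Let A be an n×n real matrix with nonnegative entries, let I be the n×n identity matrix, and for i ∈ {1,...,n} let Δᵢ denote the i-th leading principal minor of I − A (the determinant of the upper-left i×i block of I − A). Then A is normal if and only if Δᵢ > 0 for every i ∈ {1,...,n} (i.e., A is admissible in the sense of Perov). -/
/-!
If `z > 0` and `A z < z`, a minimum principle at an index minimising `xᵢ / zᵢ` shows that
`A x ≤ x` forces `x ≥ 0`; hence `1 - A` is invertible with a nonnegative inverse. Normality passes
to principal submatrices and to `t • A` for `t ≤ 1`, so `t ↦ det (1 - t • A)` has no zero on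
`[0, 1]` and every leading minor of `1 - A` is positive.

Conversely, induct on `n`. If the leading block `A'` is normal, solve `(1 - A') u = 1` and
`(1 - A') w = b`, with `b` the last column of `A`, by `u, w ≥ 0`. The Schur complement
`s = 1 - r ⬝ᵥ w - a` of `1 - A'` in `1 - A` (`r` the last row, `a` the corner) is positive since
`det (1 - A) = det (1 - A') * s`, and `z = (u + t w, t)` with `t = (1 + r ⬝ᵥ u) / s` solves
`(1 - A) z = 1` with `z ≥ 0`, so `z = 1 + A z > A z` and `z > 0`.
-/

open Matrix

namespace Matrix

variable {ι κ : Type*}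

theorem submatrix_one_sub {R : Type*} [Ring R] [DecidableEq ι] [DecidableEq κ]
    (A : Matrix ι ι R) {e : κ → ι} (he : Function.Injective e) :
    (1 - A).submatrix e e = 1 - A.submatrix e e := by
  ext a b
  simp [one_apply, he.eq_iff]

variable [Fintype ι]

/-- Normality in the sense of Perov, unrelated to `IsStarNormal`. -/
def IsNormal (A : Matrix ι ι ℝ) : Prop :=
  ∃ z : ι → ℝ, (∀ i, 0 < z i) ∧ ∀ i, (A *ᵥ z) i < z i

theorem mulVec_nonneg {A : Matrix κ ι ℝ} (hA : ∀ i j, 0 ≤ A i j) {x : ι → ℝ}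
    (hx : 0 ≤ x) : 0 ≤ A *ᵥ x :=
  fun i => Finset.sum_nonneg fun j _ => mul_nonneg (hA i j) (hx j)

namespace IsNormal

variable {A : Matrix ι ι ℝ}

theorem nonneg_of_mulVec_le (hA : ∀ i j, 0 ≤ A i j) (hN : A.IsNormal) {x : ι → ℝ}
    (hx : A *ᵥ x ≤ x) : 0 ≤ x := by
  obtain ⟨z, hz, hAz⟩ := hN
  by_contra hneg
  obtain ⟨i₁, hi₁⟩ : ∃ i, x i < 0 := by simpa [Pi.le_def] using hneg
  obtain ⟨i₀, -, hmin⟩ := Finset.exists_min_image Finset.univ (fun i => x i / z i)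
    ⟨i₁, Finset.mem_univ i₁⟩
  set m := x i₀ / z i₀
  have hm : m < 0 := (hmin i₁ (Finset.mem_univ _)).trans_lt (div_neg_of_neg_of_pos hi₁ (hz i₁))
  have hmz : 0 ≤ x - m • z := fun j => by
    simpa [sub_nonneg] using (le_div_iff₀ (hz j)).mp (hmin j (Finset.mem_univ j))
  have hx₀ : x i₀ = m * z i₀ := (div_mul_cancel₀ _ (hz i₀).ne').symm
  have h₁ : m * (A *ᵥ z) i₀ ≤ (A *ᵥ x) i₀ := by
    simpa [mulVec_sub, mulVec_smul] using mulVec_nonneg hA hmz i₀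
  have h₂ : m * z i₀ < m * (A *ᵥ z) i₀ := mul_lt_mul_of_neg_left (hAz i₀) hm
  linarith [hx i₀]

theorem det_one_sub_ne_zero [DecidableEq ι] (hA : ∀ i j, 0 ≤ A i j) (hN : A.IsNormal) :
    (1 - A).det ≠ 0 := by
  rw [Ne, ← exists_mulVec_eq_zero_iff]
  rintro ⟨v, hv, hv0⟩
  have hfix : A *ᵥ v = v := by
    rw [sub_mulVec, one_mulVec, sub_eq_zero] at hv0
    exact hv0.symm
  have hpos : 0 ≤ v := hN.nonneg_of_mulVec_le hA hfix.le
  have hneg : 0 ≤ -v := hN.nonneg_of_mulVec_le hA (by rw [mulVec_neg, hfix])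
  exact hv (le_antisymm (neg_nonneg.mp hneg) hpos)

theorem smul_of_le_one (hA : ∀ i j, 0 ≤ A i j) (hN : A.IsNormal) {t : ℝ} (ht : t ≤ 1) :
    (t • A).IsNormal := by
  obtain ⟨z, hz, hAz⟩ := hN
  refine ⟨z, hz, fun i => ?_⟩
  have hAz₀ : 0 ≤ (A *ᵥ z) i := mulVec_nonneg hA (fun j => (hz j).le) i
  calc ((t • A) *ᵥ z) i = t * (A *ᵥ z) i := by rw [smul_mulVec, Pi.smul_apply, smul_eq_mul]
    _ ≤ (A *ᵥ z) i := mul_le_of_le_one_left hAz₀ ht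
    _ < z i := hAz i

theorem det_one_sub_pos [DecidableEq ι] (hA : ∀ i j, 0 ≤ A i j) (hN : A.IsNormal) :
    0 < (1 - A).det := by
  set f : ℝ → ℝ := fun t => (1 - t • A).det
  have hf : Continuous f := by fun_prop
  have hne : ∀ t ∈ Set.Icc (0 : ℝ) 1, f t ≠ 0 := fun t ht =>
    (hN.smul_of_le_one hA ht.2).det_one_sub_ne_zero fun i j => mul_nonneg ht.1 (hA i j)
  by_contra! hle
  have h₁ : f 1 ≤ 0 := by simpa [f] using hle
  obtain ⟨t, ht, hft⟩ := intermediate_value_Icc' zero_le_one hf.continuousOn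
    (⟨h₁, by simp [f]⟩ : (0 : ℝ) ∈ Set.Icc (f 1) (f 0))
  exact hne t ht hft

theorem submatrix (hA : ∀ i j, 0 ≤ A i j) (hN : A.IsNormal) [Fintype κ] {e : κ → ι}
    (he : Function.Injective e) : (A.submatrix e e).IsNormal := by
  classical
  obtain ⟨z, hz, hAz⟩ := hN
  refine ⟨z ∘ e, fun a => hz (e a), fun a => lt_of_le_of_lt ?_ (hAz (e a))⟩
  calc (A.submatrix e e *ᵥ (z ∘ e)) a = ∑ j ∈ Finset.univ.map ⟨e, he⟩, A (e a) j * z j := by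
        simp [mulVec, dotProduct]
    _ ≤ (A *ᵥ z) (e a) :=
        Finset.sum_le_sum_of_subset_of_nonneg (Finset.subset_univ _)
          fun j _ _ => mul_nonneg (hA _ _) (hz j).le

theorem exists_nonneg_sub_mulVec_eq (hA : ∀ i j, 0 ≤ A i j) (hN : A.IsNormal) {v : ι → ℝ}
    (hv : 0 ≤ v) : ∃ x, 0 ≤ x ∧ x - A *ᵥ x = v := by
  classical
  have hunit : IsUnit (1 - A).det := (hN.det_one_sub_ne_zero hA).isUnit
  set x := (1 - A)⁻¹ *ᵥ v
  have hx : x - A *ᵥ x = v := by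
    have h : (1 - A) *ᵥ x = v := by rw [mulVec_mulVec, mul_nonsing_inv _ hunit, one_mulVec]
    rwa [sub_mulVec, one_mulVec] at h
  exact ⟨x, hN.nonneg_of_mulVec_le hA (by rw [← sub_nonneg, hx]; exact hv), hx⟩

theorem det_submatrix_one_sub_pos [DecidableEq ι] [Fintype κ] [DecidableEq κ]
    (hA : ∀ i j, 0 ≤ A i j) (hN : A.IsNormal) {e : κ → ι} (he : Function.Injective e) :
    0 < ((1 - A).submatrix e e).det := by
  rw [submatrix_one_sub A he]
  exact (hN.submatrix hA he).det_one_sub_pos fun _ _ => hA _ _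

end IsNormal

theorem isNormal_of_nonneg_of_sub_mulVec_eq_one {A : Matrix ι ι ℝ} (hA : ∀ i j, 0 ≤ A i j)
    {z : ι → ℝ} (hz : 0 ≤ z) (hAz : z - A *ᵥ z = 1) : A.IsNormal := by
  have hcomp : ∀ i, z i = (A *ᵥ z) i + 1 := fun i => by
    simpa [sub_eq_iff_eq_add'] using congrFun hAz i
  refine ⟨z, fun i => ?_, fun i => by linarith [hcomp i]⟩
  have hAz₀ : 0 ≤ (A *ᵥ z) i := mulVec_nonneg hA hz i
  linarith [hcomp i]

section Fin

variable {n : ℕ}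

theorem sub_mulVec_snoc_castSucc {R : Type*} [CommRing R]
    (A : Matrix (Fin (n + 1)) (Fin (n + 1)) R) (x : Fin n → R) (c : R) (i : Fin n) :
    (Fin.snoc x c - A *ᵥ Fin.snoc x c : Fin (n + 1) → R) i.castSucc
      = (x - A.submatrix Fin.castSucc Fin.castSucc *ᵥ x) i - A i.castSucc (Fin.last n) * c := by
  simp [mulVec, dotProduct, Fin.sum_univ_castSucc]
  ring

theorem sub_mulVec_snoc_last {R : Type*} [CommRing R]
    (A : Matrix (Fin (n + 1)) (Fin (n + 1)) R) (x : Fin n → R) (c : R) :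
    (Fin.snoc x c - A *ᵥ Fin.snoc x c : Fin (n + 1) → R) (Fin.last n)
      = c - (fun j => A (Fin.last n) j.castSucc) ⬝ᵥ x - A (Fin.last n) (Fin.last n) * c := by
  simp [mulVec, dotProduct, Fin.sum_univ_castSucc]
  ring

/-- A Schur complement formula: when `w` solves the leading block equations, `s` is the Schur
complement of the leading block. -/
theorem det_eq_det_submatrix_castSucc_mul {R : Type*} [CommRing R]
    (M : Matrix (Fin (n + 1)) (Fin (n + 1)) R) (w : Fin n → R) (s : R)
    (h : M *ᵥ Fin.snoc w 1 = Fin.snoc 0 s) :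
    M.det = (M.submatrix Fin.castSucc Fin.castSucc).det * s := by
  have hcramer : M.det = (M.updateCol (Fin.last n) (Fin.snoc 0 s)).det := by
    rw [← cramer_apply, ← h, cramer_eq_adjugate_mulVec, mulVec_mulVec, adjugate_mul, smul_mulVec,
      one_mulVec]
    simp
  rw [hcramer, det_succ_column _ (Fin.last n), Finset.sum_eq_single (Fin.last n)]
  · rw [submatrix_updateCol_succAbove, Fin.succAbove_last]
    simp [mul_comm]
  · intro i _ hi
    obtain ⟨i', rfl⟩ := Fin.exists_castSucc_eq.mpr hi
    simp
  · simp

theorem IsNormal.of_submatrix_castSucc {A : Matrix (Fin (n + 1)) (Fin (n + 1)) ℝ}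
    (hA : ∀ i j, 0 ≤ A i j) (hN : (A.submatrix Fin.castSucc Fin.castSucc).IsNormal)
    (hdet : 0 < (1 - A).det) : A.IsNormal := by
  set A' := A.submatrix Fin.castSucc Fin.castSucc
  set r : Fin n → ℝ := fun j => A (Fin.last n) j.castSucc
  have hA' : ∀ i j, 0 ≤ A' i j := fun _ _ => hA _ _
  obtain ⟨u, hu, hu₁⟩ := hN.exists_nonneg_sub_mulVec_eq hA' zero_le_one
  obtain ⟨w, hw, hwb⟩ := hN.exists_nonneg_sub_mulVec_eq hA'
    (v := fun i => A i.castSucc (Fin.last n)) fun _ => hA _ _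
  set s := 1 - r ⬝ᵥ w - A (Fin.last n) (Fin.last n)
  have hs : 0 < s := by
    have hsplit := det_eq_det_submatrix_castSucc_mul (1 - A) w s <| by
      ext i
      rw [sub_mulVec, one_mulVec]
      induction i using Fin.lastCases with
      | last => rw [sub_mulVec_snoc_last]; simp [s, r]
      | cast i => rw [sub_mulVec_snoc_castSucc, hwb]; simp
    rw [submatrix_one_sub A (Fin.castSucc_injective n)] at hsplit
    exact pos_of_mul_pos_right (hsplit ▸ hdet) (hN.det_one_sub_pos hA').le
  set t := (1 + r ⬝ᵥ u) / s
  have hts : t * s = 1 + r ⬝ᵥ u := div_mul_cancel₀ _ hs.ne'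
  have ht : 0 < t :=
    div_pos (by linarith [dotProduct_nonneg_of_nonneg (fun j => hA (Fin.last n) j.castSucc) hu]) hs
  refine isNormal_of_nonneg_of_sub_mulVec_eq_one hA (z := Fin.snoc (u + t • w) t) ?_ ?_
  · intro i
    induction i using Fin.lastCases with
    | last => simpa using ht.le
    | cast i => simpa using add_nonneg (hu i) (mul_nonneg ht.le (hw i))
  · ext i
    induction i using Fin.lastCases with
    | last =>
      rw [sub_mulVec_snoc_last, dotProduct_add, dotProduct_smul]
      simp only [smul_eq_mul, Pi.one_apply]
      linear_combination hts
    | cast i =>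
      have hsum : u + t • w - A' *ᵥ (u + t • w) = (u - A' *ᵥ u) + t • (w - A' *ᵥ w) := by
        rw [mulVec_add, mulVec_smul, smul_sub]; abel
      rw [sub_mulVec_snoc_castSucc, hsum, hu₁, hwb]
      simp [mul_comm]

theorem submatrix_castLE_one_sub_submatrix_castSucc (A : Matrix (Fin (n + 1)) (Fin (n + 1)) ℝ)
    (i : Fin n) :
    (1 - A.submatrix Fin.castSucc Fin.castSucc).submatrix (Fin.castLE i.isLt) (Fin.castLE i.isLt)
      = (1 - A).submatrix (Fin.castLE i.castSucc.isLt) (Fin.castLE i.castSucc.isLt) := by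
  rw [← submatrix_one_sub A (Fin.castSucc_injective n), submatrix_submatrix]
  rfl

theorem isNormal_of_forall_det_submatrix_castLE_pos : ∀ {n : ℕ} (A : Matrix (Fin n) (Fin n) ℝ),
    (∀ i j, 0 ≤ A i j) →
    (∀ i : Fin n, 0 < ((1 - A).submatrix (Fin.castLE i.isLt) (Fin.castLE i.isLt)).det) →
    A.IsNormal
  | 0, _, _, _ => ⟨fun _ => 1, fun i => i.elim0, fun i => i.elim0⟩
  | n + 1, A, hA, h => by
    have hA' : ∀ i j, 0 ≤ A.submatrix Fin.castSucc Fin.castSucc i j := fun _ _ => hA _ _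
    refine IsNormal.of_submatrix_castSucc hA
      (isNormal_of_forall_det_submatrix_castLE_pos _ hA' fun i => ?_)
      (by simpa using h (Fin.last n))
    rw [submatrix_castLE_one_sub_submatrix_castSucc]
    exact h i.castSucc

end Fin

end Matrix

/-- A nonnegative matrix `A` is normal iff all leading principal minors of
`I - A` are strictly positive (i.e. `A` is admissible in the sense of Perov). -/
theorem stmt3 {n : ℕ} (A : Matrix (Fin n) (Fin n) ℝ)
    (hA : ∀ i j, 0 ≤ A i j) :
    (∃ z : Fin n → ℝ, (∀ i, 0 < z i) ∧ ∀ i, A.mulVec z i < z i) ↔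
      ∀ i : Fin n,
        0 < ((1 - A).submatrix (Fin.castLE i.isLt) (Fin.castLE i.isLt)).det :=
  ⟨fun hN _ => IsNormal.det_submatrix_one_sub_pos hA hN (Fin.castLE_injective _),
    isNormal_of_forall_det_submatrix_castLE_pos A hA⟩
end

section
/- Let A be an n×n real matrix with nonnegative entries. Then A is normal if and only if A is asymptotic (i.e., Aᵖ → 0 as p → ∞). -/
/-!
If `A z ≤ c z` with `z > 0` and `c < 1`, then `A ^ p z ≤ c ^ p z` by monotonicity of nonnegative
matrices, and since `z > 0` every entry of `A ^ p` is squeezed to `0`. Conversely, if `A ^ N 𝟙 < 𝟙`,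
the vector `z = (1 + A + ⋯ + A ^ (N - 1)) 𝟙` satisfies `A z = z - (𝟙 - A ^ N 𝟙) < z`, and
`z = A z + (𝟙 - A ^ N 𝟙) > 0`.
-/

open Filter Topology Matrix Finset

namespace Matrix

variable {ι R : Type*} [Fintype ι]

section OrderedSemiring

variable [Semiring R] [PartialOrder R] [IsOrderedRing R] {A : Matrix ι ι R}

lemma mulVec_nonneg_of_nonneg (hA : ∀ i j, 0 ≤ A i j) {v : ι → R} (hv : 0 ≤ v) :
    0 ≤ A *ᵥ v :=
  fun i => dotProduct_nonneg_of_nonneg (hA i) hv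

lemma mulVec_le_mulVec_of_nonneg (hA : ∀ i j, 0 ≤ A i j) {v w : ι → R} (hvw : v ≤ w) :
    A *ᵥ v ≤ A *ᵥ w :=
  fun i => dotProduct_le_dotProduct_of_nonneg_left hvw (hA i)

lemma apply_mul_le_mulVec (hA : ∀ i j, 0 ≤ A i j) {v : ι → R} (hv : 0 ≤ v) (i j : ι) :
    A i j * v j ≤ (A *ᵥ v) i :=
  single_le_sum (fun k _ => mul_nonneg (hA i k) (hv k)) (mem_univ j)

end OrderedSemiring

lemma pow_mulVec_le_of_mulVec_le [CommSemiring R] [PartialOrder R] [IsOrderedRing R]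
    [DecidableEq ι] {A : Matrix ι ι R} (hA : ∀ i j, 0 ≤ A i j) {z : ι → R} {c : R}
    (hc : 0 ≤ c) (h : A *ᵥ z ≤ c • z) (p : ℕ) : (A ^ p) *ᵥ z ≤ c ^ p • z := by
  induction p with
  | zero => simp
  | succ p ih =>
    calc (A ^ (p + 1)) *ᵥ z = A *ᵥ ((A ^ p) *ᵥ z) := by rw [pow_succ', mulVec_mulVec]
      _ ≤ A *ᵥ (c ^ p • z) := mulVec_le_mulVec_of_nonneg hA ih
      _ = c ^ p • A *ᵥ z := mulVec_smul _ _ _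
      _ ≤ c ^ p • c • z := smul_le_smul_of_nonneg_left h (pow_nonneg hc p)
      _ = c ^ (p + 1) • z := by rw [smul_smul, pow_succ]

lemma exists_pos_mulVec_lt_of_pow_mulVec_one_lt [Ring R] [PartialOrder R] [IsOrderedRing R]
    [DecidableEq ι] {A : Matrix ι ι R} (hA : ∀ i j, 0 ≤ A i j) {N : ℕ}
    (hN : ∀ i, ((A ^ N) *ᵥ 1) i < 1) :
    ∃ z : ι → R, (∀ i, 0 < z i) ∧ ∀ i, (A *ᵥ z) i < z i := by
  set S := ∑ k ∈ range N, A ^ k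
  have hS : A * S = S - 1 + A ^ N := by
    have hgeom : S - A * S = 1 - A ^ N := by rw [← mul_neg_geom_sum A N, sub_mul, one_mul]
    calc A * S = S - (S - A * S) := by abel
      _ = S - 1 + A ^ N := by rw [hgeom]; abel
  have hAz : A *ᵥ (S *ᵥ 1) = S *ᵥ 1 - (1 - (A ^ N) *ᵥ 1) := by
    rw [mulVec_mulVec, hS, add_mulVec, sub_mulVec, one_mulVec]
    abel
  have hAz_nonneg : 0 ≤ A *ᵥ (S *ᵥ 1) := by
    refine mulVec_nonneg_of_nonneg hA (mulVec_nonneg_of_nonneg (fun i j => ?_) zero_le_one)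
    simpa only [S, sum_apply] using sum_nonneg fun k _ => pow_apply_nonneg hA k i j
  refine ⟨S *ᵥ 1, fun i => ?_, fun i => ?_⟩
  · have hz : (S *ᵥ 1) i = (A *ᵥ (S *ᵥ 1)) i + (1 - ((A ^ N) *ᵥ 1) i) := by
      rw [hAz, Pi.sub_apply, Pi.sub_apply, Pi.one_apply, sub_add_cancel]
    rw [hz]
    exact add_pos_of_nonneg_of_pos (hAz_nonneg i) (sub_pos.2 (hN i))
  · rw [hAz, Pi.sub_apply, sub_lt_self_iff, Pi.sub_apply, Pi.one_apply, sub_pos]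
    exact hN i

variable {A : Matrix ι ι ℝ}

lemma exists_mulVec_le_smul_of_mulVec_lt {z : ι → ℝ} (h : ∀ i, (A *ᵥ z) i < z i) :
    ∃ c : ℝ, 0 ≤ c ∧ c < 1 ∧ A *ᵥ z ≤ c • z := by
  have hnear : ∀ᶠ c in 𝓝 (1 : ℝ), 0 ≤ c ∧ ∀ i, (A *ᵥ z) i < c * z i := by
    refine ((lt_mem_nhds zero_lt_one).mono fun c hc => hc.le).and (eventually_all.2 fun i => ?_)
    exact (tendsto_id.mul_const (z i)).eventually (lt_mem_nhds (by simpa using h i))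
  have hbelow : ∀ᶠ c in 𝓝[<] (1 : ℝ), (0 ≤ c ∧ ∀ i, (A *ᵥ z) i < c * z i) ∧ c < 1 :=
    (hnear.filter_mono nhdsWithin_le_nhds).and self_mem_nhdsWithin
  obtain ⟨c, ⟨hc0, hcz⟩, hc1⟩ := hbelow.exists
  exact ⟨c, hc0, hc1, fun i => (hcz i).le⟩

theorem tendsto_pow_nhds_zero_of_mulVec_lt [DecidableEq ι] (hA : ∀ i j, 0 ≤ A i j) {z : ι → ℝ}
    (hz : ∀ i, 0 < z i) (h : ∀ i, (A *ᵥ z) i < z i) :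
    Tendsto (fun p : ℕ => A ^ p) atTop (𝓝 0) := by
  obtain ⟨c, hc0, hc1, hcz⟩ := exists_mulVec_le_smul_of_mulVec_lt h
  have hbound (p : ℕ) (i j : ι) : (A ^ p) i j ≤ c ^ p * z i / z j := by
    rw [le_div_iff₀ (hz j)]
    calc (A ^ p) i j * z j ≤ ((A ^ p) *ᵥ z) i :=
          apply_mul_le_mulVec (pow_apply_nonneg hA p) (fun k => (hz k).le) i j
      _ ≤ c ^ p * z i := pow_mulVec_le_of_mulVec_le hA hc0 hcz p i
  refine tendsto_pi_nhds.2 fun i => tendsto_pi_nhds.2 fun j => ?_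
  have hgeom := ((tendsto_pow_atTop_nhds_zero_of_lt_one hc0 hc1).mul_const (z i)).div_const (z j)
  rw [zero_mul, zero_div] at hgeom
  exact squeeze_zero (fun p => pow_apply_nonneg hA p i j) (fun p => hbound p i j) hgeom

lemma eventually_pow_mulVec_one_lt [DecidableEq ι]
    (h : Tendsto (fun p : ℕ => A ^ p) atTop (𝓝 0)) :
    ∀ᶠ p in atTop, ∀ i, ((A ^ p) *ᵥ 1) i < 1 := by
  have hvec : Tendsto (fun p : ℕ => (A ^ p) *ᵥ 1) atTop (𝓝 (0 : ι → ℝ)) := by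
    have hcont : Continuous fun M : Matrix ι ι ℝ => M *ᵥ 1 :=
      continuous_id.matrix_mulVec continuous_const
    exact (hcont.tendsto' 0 0 (zero_mulVec _)).comp h
  exact eventually_all.2 fun i => (tendsto_pi_nhds.1 hvec i).eventually_lt_const zero_lt_one

end Matrix

/-- A nonnegative matrix is normal iff it is asymptotic (`A^p → 0`). -/
theorem stmt7 {n : ℕ} (A : Matrix (Fin n) (Fin n) ℝ)
    (hA : ∀ i j, 0 ≤ A i j) :
    (∃ z : Fin n → ℝ, (∀ i, 0 < z i) ∧ ∀ i, A.mulVec z i < z i) ↔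
      Tendsto (fun p : ℕ => A ^ p) atTop (𝓝 0) := by
  constructor
  · rintro ⟨z, hz, hAz⟩
    exact tendsto_pow_nhds_zero_of_mulVec_lt hA hz hAz
  · intro h
    obtain ⟨N, hN⟩ := (eventually_pow_mulVec_one_lt h).exists
    exact exists_pos_mulVec_lt_of_pow_mulVec_one_lt hA hN
end

section
/- Let (X,d) be a metric space, ≤ a quasi-order (reflexive and transitive relation) on X such that d is (≤)-complete, and T : X → X an increasing self-map (x ≤ y implies Tx ≤ Ty) such that X(T,≤) = {x ∈ X : x ≤ Tx} is nonempty and there exists α ∈ (0,1) with d(Tx,Ty) ≤ α·d(x,y) for all x,y ∈ X with x ≤ y. If either T is (d,≤)-continuous or (≤) is d-self-closed, then T is a Picard operator modulo (d,≤): for every x ∈ X with x ≤ Tx, the orbit (Tⁿx)ₙ d-converges and its limit is a fixed point of T. -/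
open Filter Topology

/-- Quasi-ordered version of the Nieto–Rodriguez-Lopez theorem: if `d` is
`(≤)`-complete and `T` is increasing and contractive on comparable pairs, and
either `T` is `(d,≤)`-continuous or `(≤)` is `d`-self-closed, then `T` is a
Picard operator modulo `(d,≤)`. -/
theorem stmt9 {X : Type*} [MetricSpace X] (r : X → X → Prop)
    (hrefl : ∀ x, r x x) (htrans : ∀ x y z, r x y → r y z → r x z)
    (hcomplete : ∀ u : ℕ → X, (∀ n m : ℕ, n ≤ m → r (u n) (u m)) → CauchySeq u →
      ∃ x, Tendsto u atTop (𝓝 x))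
    (T : X → X)
    (hmono : ∀ x y, r x y → r (T x) (T y))
    (hne : ∃ x, r x (T x))
    (α : ℝ) (hα0 : 0 < α) (hα1 : α < 1)
    (hcontr : ∀ x y, r x y → dist (T x) (T y) ≤ α * dist x y)
    (hcc : (∀ (u : ℕ → X) (x : X), (∀ n m : ℕ, n ≤ m → r (u n) (u m)) →
        Tendsto u atTop (𝓝 x) → Tendsto (fun n => T (u n)) atTop (𝓝 (T x))) ∨
      (∀ (u : ℕ → X) (x : X), (∀ n m : ℕ, n ≤ m → r (u n) (u m)) →
        Tendsto u atTop (𝓝 x) → ∀ n, r (u n) x)) :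
    ∀ x : X, r x (T x) →
      ∃ z : X, Tendsto (fun n => T^[n] x) atTop (𝓝 z) ∧ T z = z := by
  intro x hx
  set u : ℕ → X := fun n => T^[n] x with hu
  have hstep : ∀ n, r (u n) (u (n + 1)) := by
    intro n
    induction n with
    | zero => simpa [u] using hx
    | succ k ih =>
      have := hmono _ _ ih
      simpa [u, Function.iterate_succ_apply'] using this
  have hasc : ∀ n m : ℕ, n ≤ m → r (u n) (u m) := by
    intro n m hnm
    induction m with
    | zero => simp_all [Nat.le_zero.mp hnm, hrefl]
    | succ k ih =>
      rcases Nat.lt_or_ge n (k + 1) with h | h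
      · exact htrans _ _ _ (ih (Nat.lt_succ_iff.mp h)) (hstep k)
      · have : n = k + 1 := le_antisymm hnm h
        subst this; exact hrefl _
  have hd : ∀ n, dist (u n) (u (n + 1)) ≤ dist x (T x) * α ^ n := by
    intro n
    induction n with
    | zero => simp [u]
    | succ k ih =>
      have h1 : dist (u (k + 1)) (u (k + 2)) ≤ α * dist (u k) (u (k + 1)) := by
        have := hcontr _ _ (hstep k)
        simpa [u, Function.iterate_succ_apply'] using this
      calc dist (u (k + 1)) (u (k + 2)) ≤ α * dist (u k) (u (k + 1)) := h1
        _ ≤ α * (dist x (T x) * α ^ k) := by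
            exact mul_le_mul_of_nonneg_left ih hα0.le
        _ = dist x (T x) * α ^ (k + 1) := by ring
  have hcauchy : CauchySeq u :=
    cauchySeq_of_le_geometric α (dist x (T x)) hα1 hd
  obtain ⟨z, hz⟩ := hcomplete u hasc hcauchy
  refine ⟨z, hz, ?_⟩
  have hz' : Tendsto (fun n => u (n + 1)) atTop (𝓝 z) :=
    hz.comp (tendsto_add_atTop_nat 1)
  rcases hcc with hcont | hclosed
  · have h1 : Tendsto (fun n => T (u n)) atTop (𝓝 (T z)) := hcont u z hasc hz
    have h2 : (fun n => T (u n)) = fun n => u (n + 1) := by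
      funext n; simp [u, Function.iterate_succ_apply']
    rw [h2] at h1
    exact tendsto_nhds_unique h1 hz'
  · have hub : ∀ n, r (u n) z := hclosed u z hasc hz
    have key : ∀ n, dist (T z) z ≤ α * dist (u n) z + dist (u (n + 1)) z := by
      intro n
      calc dist (T z) z ≤ dist (T z) (T (u n)) + dist (T (u n)) z :=
            dist_triangle _ _ _
        _ ≤ α * dist (u n) z + dist (u (n + 1)) z := by
            have h1 : dist (T z) (T (u n)) ≤ α * dist (u n) z := by
              rw [dist_comm]; exact hcontr _ _ (hub n)
            have h2 : T (u n) = u (n + 1) := by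
              simp [u, Function.iterate_succ_apply']
            rw [← h2]
            exact add_le_add h1 le_rfl
    have hlim : Tendsto (fun n => α * dist (u n) z + dist (u (n + 1)) z)
        atTop (𝓝 (α * 0 + 0)) := by
      exact ((tendsto_const_nhds.mul
        (tendsto_iff_dist_tendsto_zero.mp hz)).add
        (tendsto_iff_dist_tendsto_zero.mp hz'))
    have : dist (T z) z ≤ α * 0 + 0 :=
      le_of_tendsto_of_tendsto' tendsto_const_nhds hlim key
    have : dist (T z) z = 0 := le_antisymm (by simpa using this) dist_nonneg
    exact eq_of_dist_eq_zero this
end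

section
/- Let (X,d) be a metric space, ≤ a quasi-order on X with d (≤)-complete, and T : X → X an increasing self-map such that X(T,≤) = {x ∈ X : x ≤ Tx} is nonempty and there exists α ∈ (0,1) with d(Tx,Ty) ≤ α·d(x,y) for all x ≤ y. Suppose that either T is (d,≤)-continuous or (≤) is d-self-closed, and suppose in addition that every two points x,y ∈ X can be joined by a <>-chain (i.e., x ∼ y for all x,y ∈ X). Then T is a strong Picard operator modulo (d,≤): for every x ∈ X the orbit (Tⁿx)ₙ d-converges to a fixed point of T, and T has exactly one fixed point. -/
open Filter Topology

/-- Quasi-ordered strong Picard theorem: with the chain condition (any two points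
are joined by a `<>`-chain), the map is a strong Picard operator modulo `(d,≤)`. -/
theorem stmt10 {X : Type*} [MetricSpace X] (r : X → X → Prop)
    (hrefl : ∀ x, r x x) (htrans : ∀ x y z, r x y → r y z → r x z)
    (hcomplete : ∀ u : ℕ → X, (∀ n m : ℕ, n ≤ m → r (u n) (u m)) → CauchySeq u →
      ∃ x, Tendsto u atTop (𝓝 x))
    (T : X → X)
    (hmono : ∀ x y, r x y → r (T x) (T y))
    (hne : ∃ x, r x (T x))
    (α : ℝ) (hα0 : 0 < α) (hα1 : α < 1)
    (hcontr : ∀ x y, r x y → dist (T x) (T y) ≤ α * dist x y)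
    (hcc : (∀ (u : ℕ → X) (x : X), (∀ n m : ℕ, n ≤ m → r (u n) (u m)) →
        Tendsto u atTop (𝓝 x) → Tendsto (fun n => T (u n)) atTop (𝓝 (T x))) ∨
      (∀ (u : ℕ → X) (x : X), (∀ n m : ℕ, n ≤ m → r (u n) (u m)) →
        Tendsto u atTop (𝓝 x) → ∀ n, r (u n) x))
    (hchain : ∀ x y : X, ∃ (m : ℕ) (z : Fin (m + 2) → X),
      z 0 = x ∧ z (Fin.last (m + 1)) = y ∧
      ∀ i : Fin (m + 1), r (z i.castSucc) (z i.succ) ∨ r (z i.succ) (z i.castSucc)) :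
    ∃ z : X, T z = z ∧ (∀ w : X, T w = w → w = z) ∧
      ∀ x : X, Tendsto (fun n => T^[n] x) atTop (𝓝 z) := by
  -- iterated monotonicity
  have hiter : ∀ a b, r a b → ∀ n, r (T^[n] a) (T^[n] b) := by
    intro a b hab n
    induction n with
    | zero => simpa using hab
    | succ n ih =>
      rw [Function.iterate_succ_apply', Function.iterate_succ_apply']
      exact hmono _ _ ih
  -- iterated contraction estimate
  have hpow : ∀ a b, r a b → ∀ n, dist (T^[n] a) (T^[n] b) ≤ α ^ n * dist a b := by
    intro a b hab n
    induction n with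
    | zero => simp
    | succ n ih =>
      rw [Function.iterate_succ_apply', Function.iterate_succ_apply']
      calc dist (T (T^[n] a)) (T (T^[n] b)) ≤ α * dist (T^[n] a) (T^[n] b) :=
            hcontr _ _ (hiter a b hab n)
        _ ≤ α * (α ^ n * dist a b) := by
            exact mul_le_mul_of_nonneg_left ih hα0.le
        _ = α ^ (n + 1) * dist a b := by ring
  have hpow' : ∀ a b, (r a b ∨ r b a) → ∀ n,
      dist (T^[n] a) (T^[n] b) ≤ α ^ n * dist a b := by
    intro a b hab n
    rcases hab with h | h
    · exact hpow a b h n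
    · rw [dist_comm, dist_comm a b]; exact hpow b a h n
  -- asymptotic orbits for any two points, via chains
  have hasym : ∀ x y : X,
      Tendsto (fun n => dist (T^[n] x) (T^[n] y)) atTop (𝓝 0) := by
    intro x y
    obtain ⟨m, z, hz0, hzl, hzadj⟩ := hchain x y
    set C : ℝ := ∑ i : Fin (m + 1), dist (z i.castSucc) (z i.succ) with hC
    have hbound : ∀ n, dist (T^[n] x) (T^[n] y) ≤ α ^ n * C := by
      intro n
      have hf : ∀ k : ℕ, k ≤ m + 1 → True := fun _ _ => trivial
      -- chain function in ℕ
      set f : ℕ → X := fun k => T^[n] (z ⟨min k (m + 1), by omega⟩) with hfdef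
      have h0 : f 0 = T^[n] x := by
        have he : (⟨min 0 (m + 1), by omega⟩ : Fin (m + 2)) = 0 := by ext; simp
        simp only [hfdef, he, hz0]
      have hl : f (m + 1) = T^[n] y := by
        simp only [hfdef]
        congr 1
        rw [← hzl]
        congr 1
        simp [Fin.last]
      have key : dist (f 0) (f (m + 1)) ≤
          ∑ i ∈ Finset.range (m + 1), dist (f i) (f (i + 1)) :=
        dist_le_range_sum_dist f (m + 1)
      rw [h0, hl] at key
      refine key.trans ?_
      rw [hC, Finset.mul_sum, ← Fin.sum_univ_eq_sum_range
        (fun i => dist (f i) (f (i + 1))) (m + 1)]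
      apply Finset.sum_le_sum
      intro i _
      have h1 : (⟨min (i : ℕ) (m + 1), by omega⟩ : Fin (m + 2)) = i.castSucc := by
        ext; simp only [Fin.coe_castSucc]; omega
      have h2 : (⟨min ((i : ℕ) + 1) (m + 1), by omega⟩ : Fin (m + 2)) = i.succ := by
        ext; simp only [Fin.val_succ]; omega
      simp only [hfdef, h1, h2]
      exact hpow' _ _ (hzadj i) n
    have hα0' : Tendsto (fun n : ℕ => α ^ n * C) atTop (𝓝 0) := by
      have := tendsto_pow_atTop_nhds_zero_of_lt_one hα0.le hα1
      simpa using this.mul_const C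
    refine squeeze_zero (fun n => dist_nonneg) hbound hα0'
  -- the base point and its orbit
  obtain ⟨x₀, hx₀⟩ := hne
  set u : ℕ → X := fun n => T^[n] x₀ with hu
  have hstep : ∀ n, r (u n) (u (n + 1)) := by
    intro n
    have := hiter x₀ (T x₀) hx₀ n
    simpa [hu, Function.iterate_succ_apply] using this
  have hasc : ∀ n m : ℕ, n ≤ m → r (u n) (u m) := by
    intro n m hnm
    induction m with
    | zero =>
      have : n = 0 := Nat.le_zero.mp hnm
      subst this; exact hrefl _
    | succ m ih =>
      rcases Nat.lt_or_ge n (m + 1) with h | h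
      · exact htrans _ _ _ (ih (Nat.lt_succ_iff.mp h)) (hstep m)
      · have : n = m + 1 := le_antisymm hnm h
        subst this; exact hrefl _
  have hcauchy : CauchySeq u := by
    apply cauchySeq_of_le_geometric α (dist x₀ (T x₀)) hα1
    intro n
    have := hpow x₀ (T x₀) hx₀ n
    simpa [hu, Function.iterate_succ_apply, mul_comm] using this
  obtain ⟨z, hz⟩ := hcomplete u hasc hcauchy
  -- shifted orbit also tends to z
  have hshift : Tendsto (fun n => T (u n)) atTop (𝓝 z) := by
    have : Tendsto (fun n => u (n + 1)) atTop (𝓝 z) :=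
      hz.comp (tendsto_add_atTop_nat 1)
    simpa [hu, Function.iterate_succ_apply'] using this
  -- z is a fixed point
  have hfz : T z = z := by
    rcases hcc with hcont | hclosed
    · have h1 : Tendsto (fun n => T (u n)) atTop (𝓝 (T z)) := hcont u z hasc hz
      exact tendsto_nhds_unique h1 hshift
    · have hrn : ∀ n, r (u n) z := hclosed u z hasc hz
      have h1 : Tendsto (fun n => T (u n)) atTop (𝓝 (T z)) := by
        rw [tendsto_iff_dist_tendsto_zero]
        have hb : ∀ n, dist (T (u n)) (T z) ≤ α * dist (u n) z :=
          fun n => hcontr _ _ (hrn n)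
        have hd : Tendsto (fun n => α * dist (u n) z) atTop (𝓝 0) := by
          have := (tendsto_iff_dist_tendsto_zero.mp hz).const_mul α
          simpa using this
        exact squeeze_zero (fun n => dist_nonneg) hb hd
      exact tendsto_nhds_unique h1 hshift
  -- every orbit converges to z
  have hall : ∀ x : X, Tendsto (fun n => T^[n] x) atTop (𝓝 z) := by
    intro x
    rw [tendsto_iff_dist_tendsto_zero]
    have hb : ∀ n, dist (T^[n] x) z ≤ dist (T^[n] x) (u n) + dist (u n) z :=
      fun n => dist_triangle _ _ _
    have hd : Tendsto (fun n => dist (T^[n] x) (u n) + dist (u n) z) atTop (𝓝 0) := by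
      have h1 := hasym x x₀
      have h2 := tendsto_iff_dist_tendsto_zero.mp hz
      simpa using h1.add h2
    exact squeeze_zero (fun n => dist_nonneg) hb hd
  refine ⟨z, hfz, ?_, hall⟩
  intro w hw
  have hiterw : ∀ n, T^[n] w = w := by
    intro n
    induction n with
    | zero => simp
    | succ n ih => rw [Function.iterate_succ_apply', ih, hw]
  have : Tendsto (fun _ : ℕ => w) atTop (𝓝 z) := by
    simpa [hiterw] using hall w
  exact tendsto_nhds_unique tendsto_const_nhds this
end

section
/- Let X be a nonempty set, q ≥ 1 an integer, and Δ : X × X → ℝ^q a map with values having nonnegative components such that Δ(x,y) = 0 iff x = y, Δ(x,z) ≤ Δ(x,y) + Δ(y,z) componentwise for all x,y,z, and Δ(x,y) = Δ(y,x) (an ℝ^q-valued metric). Let ⪯ be a quasi-order on X such that Δ is (⪯)-complete, and let T : X → X be increasing (x ⪯ y implies Tx ⪯ Ty) with X(T,⪯) = {x : x ⪯ Tx} nonempty. Suppose there is a q×q real matrix A with nonnegative entries which is normal, such that Δ(Tx,Ty) ≤ A·Δ(x,y) componentwise for all x,y ∈ X with x ⪯ y. If either T is (Δ,⪯)-continuous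 or (⪯) is Δ-self-closed, then T is a Picard operator modulo (Δ,⪯): for every x with x ⪯ Tx, the orbit (Tⁿx)ₙ Δ-converges and its limit is a fixed point of T. -/
open Filter Topology Matrix

/-- Vector-valued version: for an `ℝ^q`-valued metric `Δ` which is `(⪯)`-complete,
an increasing map `T` which is `(Δ,⪯;A)`-contractive for a normal nonnegative matrix
`A`, and either `(Δ,⪯)`-continuous or with `(⪯)` `Δ`-self-closed, is a
Picard operator modulo `(Δ,⪯)`. -/
theorem stmt11 {X : Type*} [Nonempty X] (q : ℕ) (hq : 1 ≤ q)
    (Δ : X → X → (Fin q → ℝ))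
    (hpos : ∀ x y i, 0 ≤ Δ x y i)
    (hreflsuf : ∀ x y, Δ x y = 0 ↔ x = y)
    (htri : ∀ x y z i, Δ x z i ≤ Δ x y i + Δ y z i)
    (hsym : ∀ x y, Δ x y = Δ y x)
    (r : X → X → Prop)
    (hr_refl : ∀ x, r x x) (hr_trans : ∀ x y z, r x y → r y z → r x z)
    (hcomplete : ∀ u : ℕ → X, (∀ n m : ℕ, n ≤ m → r (u n) (u m)) →
      Tendsto (fun p : ℕ × ℕ => Δ (u p.1) (u p.2)) atTop (𝓝 0) →
      ∃ x, Tendsto (fun n => Δ (u n) x) atTop (𝓝 0))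
    (T : X → X)
    (hmono : ∀ x y, r x y → r (T x) (T y))
    (hne : ∃ x, r x (T x))
    (A : Matrix (Fin q) (Fin q) ℝ) (hA : ∀ i j, 0 ≤ A i j)
    (hnormal : ∃ z : Fin q → ℝ, (∀ i, 0 < z i) ∧ ∀ i, A.mulVec z i < z i)
    (hcontr : ∀ x y, r x y → ∀ i, Δ (T x) (T y) i ≤ A.mulVec (Δ x y) i)
    (hcc : (∀ (u : ℕ → X) (x : X), (∀ n m : ℕ, n ≤ m → r (u n) (u m)) →
        Tendsto (fun n => Δ (u n) x) atTop (𝓝 0) →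
        Tendsto (fun n => Δ (T (u n)) (T x)) atTop (𝓝 0)) ∨
      (∀ (u : ℕ → X) (x : X), (∀ n m : ℕ, n ≤ m → r (u n) (u m)) →
        Tendsto (fun n => Δ (u n) x) atTop (𝓝 0) → ∀ n, r (u n) x)) :
    ∀ x : X, r x (T x) →
      ∃ z : X, Tendsto (fun n => Δ (T^[n] x) z) atTop (𝓝 0) ∧ T z = z := by
  intro x hx
  obtain ⟨z, hzpos, hz⟩ := hnormal
  have hfq : Nonempty (Fin q) := ⟨⟨0, hq⟩⟩
  have hqne : (Finset.univ : Finset (Fin q)).Nonempty := Finset.univ_nonempty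
  set θ : ℝ := Finset.univ.sup' hqne (fun i => A.mulVec z i / z i) with hθdef
  have hθ1 : θ < 1 := by
    rw [hθdef, Finset.sup'_lt_iff]
    exact fun i _ => (div_lt_one (hzpos i)).2 (hz i)
  have hmv0 : ∀ i, 0 ≤ A.mulVec z i := by
    intro i
    simp only [Matrix.mulVec, dotProduct]
    exact Finset.sum_nonneg fun j _ => mul_nonneg (hA i j) (hzpos j).le
  have hθ0 : 0 ≤ θ := by
    have i0 : Fin q := ⟨0, hq⟩
    exact le_trans (div_nonneg (hmv0 i0) (hzpos i0).le)
      (Finset.le_sup' (fun i => A.mulVec z i / z i) (Finset.mem_univ i0))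
  have hAz : ∀ i, A.mulVec z i ≤ θ * z i := fun i =>
    (div_le_iff₀ (hzpos i)).1 (Finset.le_sup' (fun i => A.mulVec z i / z i) (Finset.mem_univ i))
  set d : X → X → ℝ := fun a b => Finset.univ.sup' hqne (fun i => Δ a b i / z i) with hddef
  have hdle : ∀ a b i, Δ a b i ≤ d a b * z i := fun a b i =>
    (div_le_iff₀ (hzpos i)).1 (Finset.le_sup' (fun i => Δ a b i / z i) (Finset.mem_univ i))
  have hd0 : ∀ a b, 0 ≤ d a b := fun a b =>
    le_trans (div_nonneg (hpos a b ⟨0, hq⟩) (hzpos _).le)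
      (Finset.le_sup' (fun i => Δ a b i / z i) (Finset.mem_univ ⟨0, hq⟩))
  have hdsym : ∀ a b, d a b = d b a := by
    intro a b; simp only [hddef]; rw [hsym a b]
  have hdself : ∀ a, d a a = 0 := by
    intro a
    have h0 : Δ a a = 0 := (hreflsuf a a).2 rfl
    simp [hddef, h0]
  have hdtri : ∀ a b c, d a c ≤ d a b + d b c := by
    intro a b c
    apply Finset.sup'_le
    intro i _
    calc Δ a c i / z i ≤ (Δ a b i + Δ b c i) / z i :=
          (div_le_div_iff_of_pos_right (hzpos i)).2 (htri a b c i)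
      _ = Δ a b i / z i + Δ b c i / z i := add_div _ _ _
      _ ≤ d a b + d b c := add_le_add
          (Finset.le_sup' (fun i => Δ a b i / z i) (Finset.mem_univ i))
          (Finset.le_sup' (fun i => Δ b c i / z i) (Finset.mem_univ i))
  have hdc : ∀ a b, r a b → d (T a) (T b) ≤ θ * d a b := by
    intro a b hab
    apply Finset.sup'_le
    intro i _
    rw [div_le_iff₀ (hzpos i)]
    calc Δ (T a) (T b) i ≤ A.mulVec (Δ a b) i := hcontr a b hab i
      _ = ∑ j, A i j * Δ a b j := by simp [Matrix.mulVec, dotProduct]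
      _ ≤ ∑ j, A i j * (d a b * z j) :=
          Finset.sum_le_sum fun j _ => mul_le_mul_of_nonneg_left (hdle a b j) (hA i j)
      _ = d a b * A.mulVec z i := by
          simp [Matrix.mulVec, dotProduct, Finset.mul_sum]; congr 1; ext j; ring
      _ ≤ d a b * (θ * z i) := mul_le_mul_of_nonneg_left (hAz i) (hd0 a b)
      _ = θ * d a b * z i := by ring
  set u : ℕ → X := fun n => T^[n] x with hu
  have e : ∀ k, u (k + 1) = T (u k) := fun k => Function.iterate_succ_apply' T k x
  have h1 : ∀ n, r (u n) (u (n + 1)) := by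
    intro n
    induction n with
    | zero => simpa [hu] using hx
    | succ n ih =>
        have h := hmono _ _ ih
        rwa [← e n, ← e (n + 1)] at h
  have asc : ∀ n m, n ≤ m → r (u n) (u m) := by
    intro n m hnm
    induction m, hnm using Nat.le_induction with
    | base => exact hr_refl _
    | succ m hm ih => exact hr_trans _ _ _ ih (h1 m)
  have h2 : ∀ n, d (u n) (u (n + 1)) ≤ θ ^ n * d x (T x) := by
    intro n
    induction n with
    | zero => simp [hu, e 0]
    | succ n ih =>
        calc d (u (n + 1)) (u (n + 1 + 1)) = d (T (u n)) (T (u (n + 1))) := by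
              rw [e (n + 1), e n]
          _ ≤ θ * d (u n) (u (n + 1)) := hdc _ _ (h1 n)
          _ ≤ θ * (θ ^ n * d x (T x)) := mul_le_mul_of_nonneg_left ih hθ0
          _ = θ ^ (n + 1) * d x (T x) := by ring
  have h1θ : 0 < 1 - θ := by linarith
  set C : ℝ := d x (T x) / (1 - θ) with hC
  have hC0 : 0 ≤ C := div_nonneg (hd0 _ _) h1θ.le
  have key : ∀ k n, d (u n) (u (n + k)) ≤ θ ^ n * C := by
    intro k
    induction k with
    | zero =>
        intro n
        rw [Nat.add_zero, hdself]
        positivity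
    | succ k ih =>
        intro n
        have t1 : d (u n) (u (n + (k + 1))) ≤ d (u n) (u (n + 1)) + d (u (n + 1)) (u (n + 1 + k)) := by
          rw [show n + (k + 1) = n + 1 + k by omega]
          exact hdtri (u n) (u (n + 1)) (u (n + 1 + k))
        calc d (u n) (u (n + (k + 1))) ≤ d (u n) (u (n + 1)) + d (u (n + 1)) (u (n + 1 + k)) := t1
          _ ≤ θ ^ n * d x (T x) + θ ^ (n + 1) * C := add_le_add (h2 n) (ih (n + 1))
          _ = θ ^ n * C := by
              rw [hC]; field_simp; ring
  have hboundmin : ∀ n m, d (u n) (u m) ≤ θ ^ min n m * C := by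
    intro n m
    rcases le_total n m with h | h
    · rw [min_eq_left h]
      have := key (m - n) n
      rwa [Nat.add_sub_cancel' h] at this
    · rw [min_eq_right h, hdsym]
      have := key (n - m) m
      rwa [Nat.add_sub_cancel' h] at this
  have hmin : Tendsto (fun p : ℕ × ℕ => θ ^ min p.1 p.2) atTop (𝓝 0) := by
    have hminT : Tendsto (fun p : ℕ × ℕ => min p.1 p.2) atTop atTop := by
      rw [tendsto_atTop]; intro b
      filter_upwards [eventually_ge_atTop (b, b)] with p hp
      exact le_min hp.1 hp.2
    exact (tendsto_pow_atTop_nhds_zero_of_lt_one hθ0 hθ1).comp hminT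
  have hcauchy : Tendsto (fun p : ℕ × ℕ => Δ (u p.1) (u p.2)) atTop (𝓝 0) := by
    rw [tendsto_pi_nhds]
    intro i
    show Tendsto (fun p : ℕ × ℕ => Δ (u p.1) (u p.2) i) atTop (𝓝 0)
    apply squeeze_zero (fun p => hpos _ _ i)
      (g := fun p : ℕ × ℕ => θ ^ min p.1 p.2 * (C * z i))
      (fun p => ?_)
    · simpa using hmin.mul_const (C * z i)
    · calc Δ (u p.1) (u p.2) i ≤ d (u p.1) (u p.2) * z i := hdle _ _ i
        _ ≤ (θ ^ min p.1 p.2 * C) * z i :=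
            mul_le_mul_of_nonneg_right (hboundmin p.1 p.2) (hzpos i).le
        _ = θ ^ min p.1 p.2 * (C * z i) := by ring
  obtain ⟨w, hw⟩ := hcomplete u asc hcauchy
  have hwi : ∀ i, Tendsto (fun n => Δ (u n) w i) atTop (𝓝 0) := fun i => by
    simpa using tendsto_pi_nhds.1 hw i
  have hshift : Tendsto (fun n => Δ (u (n + 1)) w) atTop (𝓝 0) :=
    hw.comp (tendsto_add_atTop_nat 1)
  have hshifti : ∀ i, Tendsto (fun n => Δ (u (n + 1)) w i) atTop (𝓝 0) := fun i => by
    simpa using tendsto_pi_nhds.1 hshift i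
  suffices hfix : ∀ i, Tendsto (fun n => Δ (T (u n)) (T w) i) atTop (𝓝 0) by
    have hzero : ∀ i, Δ (T w) w i = 0 := by
      intro i
      refine le_antisymm ?_ (hpos _ _ i)
      have hsum : Tendsto (fun n => Δ (T (u n)) (T w) i + Δ (u (n + 1)) w i) atTop (𝓝 0) := by
        simpa using (hfix i).add (hshifti i)
      refine ge_of_tendsto' hsum fun n => ?_
      calc Δ (T w) w i ≤ Δ (T w) (u (n + 1)) i + Δ (u (n + 1)) w i := htri _ _ _ i
        _ = Δ (T (u n)) (T w) i + Δ (u (n + 1)) w i := by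
            rw [hsym (T w) (u (n + 1)), e n]
    exact ⟨w, hw, (hreflsuf _ _).1 (funext hzero)⟩
  rcases hcc with hT | hS
  · intro i
    simpa using tendsto_pi_nhds.1 (hT u w asc hw) i
  · have hr : ∀ n, r (u n) w := hS u w asc hw
    intro i
    apply squeeze_zero (fun n => hpos _ _ i) (fun n => hcontr _ _ (hr n) i)
    have hsum : Tendsto (fun n => ∑ j, A i j * Δ (u n) w j) atTop (𝓝 0) := by
      have := tendsto_finset_sum Finset.univ fun j (_ : j ∈ Finset.univ) => (hwi j).const_mul (A i j)
      simpa using this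
    simpa [Matrix.mulVec, dotProduct] using hsum
end

section
/- Let {(Xᵢ,dᵢ,≤ᵢ) : 1 ≤ i ≤ q} be quasi-ordered metric spaces with each dᵢ (≤ᵢ)-complete, and let X = ∏ᵢ Xᵢ with Δ(x,y) = (d₁(x₁,y₁),...,d_q(x_q,y_q)) and x ⪯ y iff xᵢ ≤ᵢ yᵢ for all i. Let Tᵢ : X → Xᵢ (1 ≤ i ≤ q) be maps such that: there exists a = (a₁,...,a_q) ∈ X with aᵢ ≤ᵢ Tᵢa for all i; each Tᵢ is increasing (x ⪯ y implies Tᵢx ≤ᵢ Tᵢy); and there is a normal q×q matrix A = (a_{ij}) with nonnegative entries such that dᵢ(Tᵢx,Tᵢy) ≤ ∑ⱼ a_{ij}·dⱼ(xⱼ,yⱼ) for all x ⪯ y and all i. If either every Tᵢ is (Δ,⪯)-continuous, or every (≤ᵢ) is dᵢ-self-closed, then the associated self-map T : X → X, Tx = (T₁x,...,T_qx), is a Picard operator modulo (Δ,⪯): for every x ∈ X with x ⪯ Tx, the orbit (Tⁿx)ₙ converges coordinatewise and its limit is a fixed point of T. -/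
/-!
The orbit of `x ⪯ T x` is ascending, so the contraction condition applies to consecutive
terms: the vector of successive distances `δₙ` satisfies `δₙ₊₁ ≤ A δₙ`. Normality of `A`
gives a positive `z` and `r < 1` with `A z ≤ r z`, so `δₙ ≤ C rⁿ z` and every coordinate of the
orbit is a Cauchy sequence with a limit `w`. Since the orbit is shifted by `T`, `Tᵢ` of the orbit
also tends to `wᵢ`; it tends to `Tᵢ w` either by continuity or, when the orders are self-closed,
because `w` bounds the orbit and the contraction condition can be applied to the pairs `(Tⁿx, w)`.
-/

open Filter Topology Matrix

theorem rel_iterate_of_rel_map {α : Type*} {R : α → α → Prop} (hrefl : ∀ a, R a a)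
    (htrans : ∀ a b c, R a b → R b c → R a c) {f : α → α} (hf : ∀ a b, R a b → R (f a) (f b))
    {x : α} (hx : R x (f x)) {n m : ℕ} (hnm : n ≤ m) : R (f^[n] x) (f^[m] x) := by
  have hsucc : ∀ k, R (f^[k] x) (f^[k + 1] x) := by
    intro k
    induction k with
    | zero => exact hx
    | succ k ih =>
      rw [Function.iterate_succ_apply' f k, Function.iterate_succ_apply' f (k + 1)]
      exact hf _ _ ih
  have : Std.Refl R := ⟨hrefl⟩
  have : IsTrans α R := ⟨htrans⟩
  exact Nat.rel_of_forall_rel_succ_of_le R hsucc hnm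

theorem exists_nonneg_lt_one_le_mul_of_lt {ι : Type*} [Finite ι] {v w : ι → ℝ}
    (hvw : ∀ i, v i < w i) : ∃ r, 0 ≤ r ∧ r < 1 ∧ ∀ i, v i ≤ r * w i := by
  have hnear : ∀ i, ∀ᶠ r in 𝓝[<] (1 : ℝ), v i < r * w i := fun i =>
    nhdsWithin_le_nhds <| (continuousAt_const (y := v i)).eventually_lt
      (continuousAt_id.mul continuousAt_const) (by simpa using hvw i)
  have hIoo : ∀ᶠ r in 𝓝[<] (1 : ℝ), r ∈ Set.Ioo 0 1 := Ioo_mem_nhdsLT zero_lt_one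
  obtain ⟨r, ⟨hr0, hr1⟩, hr⟩ := (hIoo.and (eventually_all.2 hnear)).exists
  exact ⟨r, hr0.le, hr1, fun i => (hr i).le⟩

theorem exists_nonneg_le_mul_of_pos {ι : Type*} [Finite ι] (v : ι → ℝ) {z : ι → ℝ}
    (hz : ∀ i, 0 < z i) : ∃ C, 0 ≤ C ∧ ∀ i, v i ≤ C * z i := by
  have hlarge : ∀ i, ∀ᶠ C in atTop, v i ≤ C * z i := fun i =>
    (tendsto_id.atTop_mul_const (hz i)).eventually_ge_atTop (v i)
  obtain ⟨C, hC0, hC⟩ := ((eventually_ge_atTop 0).and (eventually_all.2 hlarge)).exists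
  exact ⟨C, hC0, hC⟩

theorem le_geometric_of_le_sum_mul {ι : Type*} [Fintype ι] {A : Matrix ι ι ℝ}
    (hA : ∀ i j, 0 ≤ A i j) {z : ι → ℝ} {r C : ℝ} (hr : 0 ≤ r) (hC : 0 ≤ C)
    (hAz : ∀ i, (A *ᵥ z) i ≤ r * z i) {δ : ℕ → ι → ℝ} (h0 : ∀ i, δ 0 i ≤ C * z i)
    (hδ : ∀ n i, δ (n + 1) i ≤ ∑ j, A i j * δ n j) : ∀ n i, δ n i ≤ C * r ^ n * z i := by
  intro n
  induction n with
  | zero => simpa using h0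
  | succ n ih =>
    intro i
    calc δ (n + 1) i ≤ ∑ j, A i j * δ n j := hδ n i
      _ ≤ ∑ j, A i j * (C * r ^ n * z j) :=
        Finset.sum_le_sum fun j _ => mul_le_mul_of_nonneg_left (ih j) (hA i j)
      _ = C * r ^ n * (A *ᵥ z) i := by
        simp only [mulVec, dotProduct, Finset.mul_sum]
        exact Finset.sum_congr rfl fun j _ => by ring
      _ ≤ C * r ^ n * (r * z i) := by gcongr; exact hAz i
      _ = C * r ^ (n + 1) * z i := by ring

theorem tendsto_of_dist_le_sum_mul_dist {ι : Type*} [Fintype ι] {X : ι → Type*}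
    [∀ i, PseudoMetricSpace (X i)] {Y : Type*} [PseudoMetricSpace Y] {g : (∀ j, X j) → Y}
    {c : ι → ℝ} {u : ℕ → ∀ j, X j} {w : ∀ j, X j}
    (hu : ∀ j, Tendsto (fun n => u n j) atTop (𝓝 (w j)))
    (hg : ∀ n, dist (g (u n)) (g w) ≤ ∑ j, c j * dist (u n j) (w j)) :
    Tendsto (fun n => g (u n)) atTop (𝓝 (g w)) := by
  have hsum : Tendsto (fun n => ∑ j, c j * dist (u n j) (w j)) atTop (𝓝 0) := by
    simpa using tendsto_finsetSum Finset.univ fun j _ =>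
      (tendsto_iff_dist_tendsto_zero.1 (hu j)).const_mul (c j)
  exact tendsto_iff_dist_tendsto_zero.2 <|
    squeeze_zero (fun _ => dist_nonneg) hg hsum

theorem stmt12_general {q : ℕ} (X : Fin q → Type*) [∀ i, MetricSpace (X i)]
    (le : ∀ i, X i → X i → Prop)
    (hrefl : ∀ i x, le i x x)
    (htrans : ∀ i x y z, le i x y → le i y z → le i x z)
    (hcomplete : ∀ i, ∀ u : ℕ → X i, (∀ n m : ℕ, n ≤ m → le i (u n) (u m)) →
      CauchySeq u → ∃ x, Tendsto u atTop (𝓝 x))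
    (T : ∀ i, (∀ j, X j) → X i)
    (F : (∀ j, X j) → (∀ j, X j)) (hF : ∀ x i, F x i = T i x)
    (hmono : ∀ i, ∀ x y : ∀ j, X j, (∀ j, le j (x j) (y j)) → le i (T i x) (T i y))
    (A : Matrix (Fin q) (Fin q) ℝ) (hA : ∀ i j, 0 ≤ A i j)
    (hnormal : ∃ z : Fin q → ℝ, (∀ i, 0 < z i) ∧ ∀ i, A.mulVec z i < z i)
    (hcontr : ∀ x y : ∀ j, X j, (∀ j, le j (x j) (y j)) →
      ∀ i, dist (T i x) (T i y) ≤ ∑ j, A i j * dist (x j) (y j))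
    (hcc : (∀ i, ∀ (u : ℕ → ∀ j, X j) (x : ∀ j, X j),
        (∀ n m : ℕ, n ≤ m → ∀ j, le j (u n j) (u m j)) →
        (∀ j, Tendsto (fun n => u n j) atTop (𝓝 (x j))) →
        Tendsto (fun n => T i (u n)) atTop (𝓝 (T i x))) ∨
      (∀ i, ∀ (u : ℕ → X i) (x : X i), (∀ n m : ℕ, n ≤ m → le i (u n) (u m)) →
        Tendsto u atTop (𝓝 x) → ∀ n, le i (u n) x)) :
    ∀ x : ∀ j, X j, (∀ i, le i (x i) (T i x)) →
      ∃ z : ∀ j, X j, (∀ i, Tendsto (fun n => F^[n] x i) atTop (𝓝 (z i))) ∧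
        ∀ i, T i z = z i := by
  intro x hx
  obtain ⟨z, hz, hAz⟩ := hnormal
  obtain ⟨r, hr0, hr1, hAzr⟩ := exists_nonneg_lt_one_le_mul_of_lt hAz
  have hstep : ∀ n i, F^[n + 1] x i = T i (F^[n] x) := fun n i => by
    rw [Function.iterate_succ_apply', hF]
  have hasc : ∀ n m, n ≤ m → ∀ j, le j (F^[n] x j) (F^[m] x j) := fun n m =>
    rel_iterate_of_rel_map (R := fun a b : ∀ j, X j => ∀ j, le j (a j) (b j))
      (fun a j => hrefl j (a j))
      (fun a b c hab hbc j => htrans j _ _ _ (hab j) (hbc j))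
      (fun a b hab j => by rw [hF, hF]; exact hmono j a b hab) (by simpa only [hF] using hx)
  obtain ⟨C, hC0, hC⟩ := exists_nonneg_le_mul_of_pos (fun i => dist (x i) (F x i)) hz
  have hgeom := le_geometric_of_le_sum_mul (δ := fun n i => dist (F^[n] x i) (F^[n + 1] x i))
    hA hr0 hC0 hAzr hC fun n i => by
      rw [hstep (n + 1) i, hstep n i]
      exact hcontr _ _ (fun j => hasc n (n + 1) n.le_succ j) i
  have hlim : ∀ i, ∃ w, Tendsto (fun n => F^[n] x i) atTop (𝓝 w) := fun i =>
    hcomplete i _ (fun n m h => hasc n m h i) <| cauchySeq_of_le_geometric r (C * z i) hr1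
      fun n => (hgeom n i).trans_eq (by ring)
  choose w hw using hlim
  have hshift : ∀ i, Tendsto (fun n => T i (F^[n] x)) atTop (𝓝 (w i)) := fun i => by
    simpa only [Function.comp_def, hstep] using (hw i).comp (tendsto_add_atTop_nat 1)
  refine ⟨w, hw, fun i => tendsto_nhds_unique ?_ (hshift i)⟩
  rcases hcc with hcont | hclosed
  · exact hcont i _ w hasc hw
  · refine tendsto_of_dist_le_sum_mul_dist hw fun n => hcontr _ _ (fun j => ?_) i
    exact hclosed j _ (w j) (fun n m h => hasc n m h j) (hw j) n

/-- Product fixed point theorem: for a system of quasi-ordered metric spaces with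
each `dᵢ` `(≤ᵢ)`-complete and maps `Tᵢ` increasing, admitting a start point and
satisfying a linear contraction condition governed by a normal nonnegative matrix,
under the continuity or self-closedness alternative the associated product map
`F x = (T₁ x, …, T_q x)` is a Picard operator. -/
theorem stmt12 {q : ℕ} (X : Fin q → Type*) [∀ i, MetricSpace (X i)]
    (le : ∀ i, X i → X i → Prop)
    (hrefl : ∀ i x, le i x x)
    (htrans : ∀ i x y z, le i x y → le i y z → le i x z)
    (hcomplete : ∀ i, ∀ u : ℕ → X i, (∀ n m : ℕ, n ≤ m → le i (u n) (u m)) →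
      CauchySeq u → ∃ x, Tendsto u atTop (𝓝 x))
    (T : ∀ i, (∀ j, X j) → X i)
    (F : (∀ j, X j) → (∀ j, X j)) (hF : ∀ x i, F x i = T i x)
    (ha : ∃ a : ∀ j, X j, ∀ i, le i (a i) (T i a))
    (hmono : ∀ i, ∀ x y : ∀ j, X j, (∀ j, le j (x j) (y j)) → le i (T i x) (T i y))
    (A : Matrix (Fin q) (Fin q) ℝ) (hA : ∀ i j, 0 ≤ A i j)
    (hnormal : ∃ z : Fin q → ℝ, (∀ i, 0 < z i) ∧ ∀ i, A.mulVec z i < z i)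
    (hcontr : ∀ x y : ∀ j, X j, (∀ j, le j (x j) (y j)) →
      ∀ i, dist (T i x) (T i y) ≤ ∑ j, A i j * dist (x j) (y j))
    (hcc : (∀ i, ∀ (u : ℕ → ∀ j, X j) (x : ∀ j, X j),
        (∀ n m : ℕ, n ≤ m → ∀ j, le j (u n j) (u m j)) →
        (∀ j, Tendsto (fun n => u n j) atTop (𝓝 (x j))) →
        Tendsto (fun n => T i (u n)) atTop (𝓝 (T i x))) ∨
      (∀ i, ∀ (u : ℕ → X i) (x : X i), (∀ n m : ℕ, n ≤ m → le i (u n) (u m)) →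
        Tendsto u atTop (𝓝 x) → ∀ n, le i (u n) x)) :
    ∀ x : ∀ j, X j, (∀ i, le i (x i) (T i x)) →
      ∃ z : ∀ j, X j, (∀ i, Tendsto (fun n => F^[n] x i) atTop (𝓝 (z i))) ∧
        ∀ i, T i z = z i :=
  stmt12_general X le hrefl htrans hcomplete T F hF hmono A hA hnormal hcontr hcc
end

section
/- Let (X,d,≤) be a partially ordered metric space with d complete, and F : X³ → X a mixed monotone map such that there exists (a₁,a₂,a₃) ∈ X³ with a₁ ≤ F(a₁,a₂,a₃), a₂ ≥ F(a₂,a₁,a₂), a₃ ≤ F(a₃,a₂,a₁), and there exist α₁,α₂,α₃ > 0 with α₁+α₂+α₃ < 1 such that d(F(x₁,x₂,x₃),F(y₁,y₂,y₃)) ≤ α₁·d(x₁,y₁) + α₂·d(x₂,y₂) + α₃·d(x₃,y₃) for all (x₁,x₂,x₃), (y₁,y₂,y₃) ∈ X³ with x₁ ≤ y₁, x₂ ≥ y₂, x₃ ≤ y₃. If either F is continuous, or both (≤) and (≥) are d-self-closed, then F has at least one tripled fixed point, i.e., a point (b₁,b₂,b₃) ∈ X³ with b₁ = F(b₁,b₂,b₃),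 b₂ = F(b₂,b₁,b₂), b₃ = F(b₃,b₂,b₁). -/
open Filter Topology

/-- Berinde–Borcut tripled fixed point theorem: a mixed monotone map on a complete
partially ordered metric space satisfying a linear contraction condition with
`α₁ + α₂ + α₃ < 1`, a start point condition, and a continuity or self-closedness
alternative, has at least one tripled fixed point. -/
theorem stmt13 {X : Type*} [MetricSpace X] [PartialOrder X] [CompleteSpace X]
    (F : X → X → X → X)
    (hmix1 : ∀ x₁ x₂ y z : X, x₁ ≤ x₂ → F x₁ y z ≤ F x₂ y z)
    (hmix2 : ∀ x y₁ y₂ z : X, y₁ ≤ y₂ → F x y₂ z ≤ F x y₁ z)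
    (hmix3 : ∀ x y z₁ z₂ : X, z₁ ≤ z₂ → F x y z₁ ≤ F x y z₂)
    (ha : ∃ a₁ a₂ a₃ : X, a₁ ≤ F a₁ a₂ a₃ ∧ F a₂ a₁ a₂ ≤ a₂ ∧ a₃ ≤ F a₃ a₂ a₁)
    (α₁ α₂ α₃ : ℝ) (h1 : 0 < α₁) (h2 : 0 < α₂) (h3 : 0 < α₃)
    (hsum : α₁ + α₂ + α₃ < 1)
    (hcontr : ∀ x₁ x₂ x₃ y₁ y₂ y₃ : X, x₁ ≤ y₁ → y₂ ≤ x₂ → x₃ ≤ y₃ →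
      dist (F x₁ x₂ x₃) (F y₁ y₂ y₃) ≤
        α₁ * dist x₁ y₁ + α₂ * dist x₂ y₂ + α₃ * dist x₃ y₃)
    (hcc : Continuous (fun p : X × X × X => F p.1 p.2.1 p.2.2) ∨
      ((∀ (u : ℕ → X) (x : X), (∀ n m : ℕ, n ≤ m → u n ≤ u m) →
          Tendsto u atTop (𝓝 x) → ∀ n, u n ≤ x) ∧
       (∀ (u : ℕ → X) (x : X), (∀ n m : ℕ, n ≤ m → u m ≤ u n) →
          Tendsto u atTop (𝓝 x) → ∀ n, x ≤ u n))) :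
    ∃ b₁ b₂ b₃ : X, b₁ = F b₁ b₂ b₃ ∧ b₂ = F b₂ b₁ b₂ ∧ b₃ = F b₃ b₂ b₁ := by
  obtain ⟨a₁, a₂, a₃, ha1, ha2, ha3⟩ := ha
  set α : ℝ := α₁ + α₂ + α₃ with hαdef
  have hα0 : 0 ≤ α := by positivity
  -- Picard iterates
  let t : ℕ → X × X × X := fun n => Nat.rec (a₁, a₂, a₃)
    (fun _ p => (F p.1 p.2.1 p.2.2, F p.2.1 p.1 p.2.1, F p.2.2 p.2.1 p.1)) n
  set x : ℕ → X := fun n => (t n).1 with hxdef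
  set y : ℕ → X := fun n => (t n).2.1 with hydef
  set z : ℕ → X := fun n => (t n).2.2 with hzdef
  have hx0 : x 0 = a₁ := rfl
  have hy0 : y 0 = a₂ := rfl
  have hz0 : z 0 = a₃ := rfl
  have hxs : ∀ n, x (n + 1) = F (x n) (y n) (z n) := fun n => rfl
  have hys : ∀ n, y (n + 1) = F (y n) (x n) (y n) := fun n => rfl
  have hzs : ∀ n, z (n + 1) = F (z n) (y n) (x n) := fun n => rfl
  -- step monotonicity
  have hstep : ∀ n, x n ≤ x (n + 1) ∧ y (n + 1) ≤ y n ∧ z n ≤ z (n + 1) := by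
    intro n
    induction n with
    | zero => exact ⟨ha1, ha2, ha3⟩
    | succ n ih =>
      obtain ⟨hx, hy, hz⟩ := ih
      refine ⟨?_, ?_, ?_⟩
      · rw [hxs n, hxs (n + 1)]
        calc F (x n) (y n) (z n) ≤ F (x (n + 1)) (y n) (z n) := hmix1 _ _ _ _ hx
          _ ≤ F (x (n + 1)) (y (n + 1)) (z n) := hmix2 _ _ _ _ hy
          _ ≤ F (x (n + 1)) (y (n + 1)) (z (n + 1)) := hmix3 _ _ _ _ hz
      · rw [hys n, hys (n + 1)]
        calc F (y (n + 1)) (x (n + 1)) (y (n + 1))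
            ≤ F (y n) (x (n + 1)) (y (n + 1)) := hmix1 _ _ _ _ hy
          _ ≤ F (y n) (x n) (y (n + 1)) := hmix2 _ _ _ _ hx
          _ ≤ F (y n) (x n) (y n) := hmix3 _ _ _ _ hy
      · rw [hzs n, hzs (n + 1)]
        calc F (z n) (y n) (x n) ≤ F (z (n + 1)) (y n) (x n) := hmix1 _ _ _ _ hz
          _ ≤ F (z (n + 1)) (y (n + 1)) (x n) := hmix2 _ _ _ _ hy
          _ ≤ F (z (n + 1)) (y (n + 1)) (x (n + 1)) := hmix3 _ _ _ _ hx
  have hxm : Monotone x := monotone_nat_of_le_succ fun n => (hstep n).1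
  have hym : Antitone y := antitone_nat_of_succ_le fun n => (hstep n).2.1
  have hzm : Monotone z := monotone_nat_of_le_succ fun n => (hstep n).2.2
  -- contraction of step distances
  set M : ℕ → ℝ := fun n =>
    max (dist (x n) (x (n + 1))) (max (dist (y n) (y (n + 1))) (dist (z n) (z (n + 1))))
  have hMx : ∀ n, dist (x n) (x (n + 1)) ≤ M n := fun n => le_max_left _ _
  have hMy : ∀ n, dist (y n) (y (n + 1)) ≤ M n := fun n =>
    le_trans (le_max_left _ _) (le_max_right _ _)
  have hMz : ∀ n, dist (z n) (z (n + 1)) ≤ M n := fun n =>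
    le_trans (le_max_right _ _) (le_max_right _ _)
  have hM0 : ∀ n, 0 ≤ M n := fun n => le_trans dist_nonneg (hMx n)
  have hMcontr : ∀ n, M (n + 1) ≤ α * M n := by
    intro n
    have hxc : dist (x (n + 1)) (x (n + 2)) ≤ α * M n := by
      rw [hxs n, hxs (n + 1)]
      calc dist (F (x n) (y n) (z n)) (F (x (n + 1)) (y (n + 1)) (z (n + 1)))
          ≤ α₁ * dist (x n) (x (n + 1)) + α₂ * dist (y n) (y (n + 1)) +
            α₃ * dist (z n) (z (n + 1)) :=
            hcontr _ _ _ _ _ _ ((hstep n).1) ((hstep n).2.1) ((hstep n).2.2)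
        _ ≤ α₁ * M n + α₂ * M n + α₃ * M n := by
            gcongr <;> [exact hMx n; exact hMy n; exact hMz n]
        _ = α * M n := by rw [hαdef]; ring
    have hyc : dist (y (n + 1)) (y (n + 2)) ≤ α * M n := by
      rw [hys n, hys (n + 1), dist_comm]
      calc dist (F (y (n + 1)) (x (n + 1)) (y (n + 1))) (F (y n) (x n) (y n))
          ≤ α₁ * dist (y (n + 1)) (y n) + α₂ * dist (x (n + 1)) (x n) +
            α₃ * dist (y (n + 1)) (y n) :=
            hcontr _ _ _ _ _ _ ((hstep n).2.1) ((hstep n).1) ((hstep n).2.1)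
        _ = α₁ * dist (y n) (y (n + 1)) + α₂ * dist (x n) (x (n + 1)) +
            α₃ * dist (y n) (y (n + 1)) := by rw [dist_comm (y (n+1)), dist_comm (x (n+1))]
        _ ≤ α₁ * M n + α₂ * M n + α₃ * M n := by
            gcongr <;> [exact hMy n; exact hMx n; exact hMy n]
        _ = α * M n := by rw [hαdef]; ring
    have hzc : dist (z (n + 1)) (z (n + 2)) ≤ α * M n := by
      rw [hzs n, hzs (n + 1)]
      calc dist (F (z n) (y n) (x n)) (F (z (n + 1)) (y (n + 1)) (x (n + 1)))
          ≤ α₁ * dist (z n) (z (n + 1)) + α₂ * dist (y n) (y (n + 1)) +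
            α₃ * dist (x n) (x (n + 1)) :=
            hcontr _ _ _ _ _ _ ((hstep n).2.2) ((hstep n).2.1) ((hstep n).1)
        _ ≤ α₁ * M n + α₂ * M n + α₃ * M n := by
            gcongr <;> [exact hMz n; exact hMy n; exact hMx n]
        _ = α * M n := by rw [hαdef]; ring
    exact max_le hxc (max_le hyc hzc)
  have hMgeo : ∀ n, M n ≤ M 0 * α ^ n := by
    intro n
    induction n with
    | zero => simp
    | succ n ih =>
      calc M (n + 1) ≤ α * M n := hMcontr n
        _ ≤ α * (M 0 * α ^ n) := by gcongr
        _ = M 0 * α ^ (n + 1) := by ring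
  -- Cauchy sequences
  have hαlt : α < 1 := hsum
  have hcx : CauchySeq x := cauchySeq_of_le_geometric α (M 0) hαlt fun n =>
    le_trans (hMx n) (hMgeo n)
  have hcy : CauchySeq y := cauchySeq_of_le_geometric α (M 0) hαlt fun n =>
    le_trans (hMy n) (hMgeo n)
  have hcz : CauchySeq z := cauchySeq_of_le_geometric α (M 0) hαlt fun n =>
    le_trans (hMz n) (hMgeo n)
  obtain ⟨b₁, hbx⟩ := cauchySeq_tendsto_of_complete hcx
  obtain ⟨b₂, hby⟩ := cauchySeq_tendsto_of_complete hcy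
  obtain ⟨b₃, hbz⟩ := cauchySeq_tendsto_of_complete hcz
  refine ⟨b₁, b₂, b₃, ?_⟩
  have hbx' : Tendsto (fun n => x (n + 1)) atTop (𝓝 b₁) :=
    hbx.comp (tendsto_add_atTop_nat 1)
  have hby' : Tendsto (fun n => y (n + 1)) atTop (𝓝 b₂) :=
    hby.comp (tendsto_add_atTop_nat 1)
  have hbz' : Tendsto (fun n => z (n + 1)) atTop (𝓝 b₃) :=
    hbz.comp (tendsto_add_atTop_nat 1)
  rcases hcc with hcont | ⟨hasc, hdesc⟩
  · -- continuous case
    have htrip : Tendsto (fun n => ((x n, y n, z n) : X × X × X)) atTop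
        (𝓝 (b₁, b₂, b₃)) := hbx.prodMk_nhds (hby.prodMk_nhds hbz)
    have hFx : Tendsto (fun n => F (x n) (y n) (z n)) atTop (𝓝 (F b₁ b₂ b₃)) :=
      (hcont.tendsto _).comp htrip
    have hFy : Tendsto (fun n => F (y n) (x n) (y n)) atTop (𝓝 (F b₂ b₁ b₂)) := by
      have : Tendsto (fun n => ((y n, x n, y n) : X × X × X)) atTop
          (𝓝 (b₂, b₁, b₂)) := hby.prodMk_nhds (hbx.prodMk_nhds hby)
      exact (hcont.tendsto _).comp this
    have hFz : Tendsto (fun n => F (z n) (y n) (x n)) atTop (𝓝 (F b₃ b₂ b₁)) := by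
      have : Tendsto (fun n => ((z n, y n, x n) : X × X × X)) atTop
          (𝓝 (b₃, b₂, b₁)) := hbz.prodMk_nhds (hby.prodMk_nhds hbx)
      exact (hcont.tendsto _).comp this
    refine ⟨tendsto_nhds_unique hbx' (by simpa only [hxs] using hFx),
      tendsto_nhds_unique hby' (by simpa only [hys] using hFy),
      tendsto_nhds_unique hbz' (by simpa only [hzs] using hFz)⟩
  · -- self-closed case
    have hxb : ∀ n, x n ≤ b₁ := hasc x b₁ (fun n m h => hxm h) hbx
    have hyb : ∀ n, b₂ ≤ y n := hdesc y b₂ (fun n m h => hym h) hby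
    have hzb : ∀ n, z n ≤ b₃ := hasc z b₃ (fun n m h => hzm h) hbz
    have hd1 : Tendsto (fun n => dist (x n) b₁) atTop (𝓝 0) :=
      tendsto_iff_dist_tendsto_zero.mp hbx
    have hd2 : Tendsto (fun n => dist (y n) b₂) atTop (𝓝 0) :=
      tendsto_iff_dist_tendsto_zero.mp hby
    have hd3 : Tendsto (fun n => dist (z n) b₃) atTop (𝓝 0) :=
      tendsto_iff_dist_tendsto_zero.mp hbz
    have hsum0 : Tendsto (fun n => dist (x (n + 1)) b₁ +
        (α₁ * dist (x n) b₁ + α₂ * dist (y n) b₂ + α₃ * dist (z n) b₃)) atTop (𝓝 0) := by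
      have := (hd1.comp (tendsto_add_atTop_nat 1)).add
        (((hd1.const_mul α₁).add (hd2.const_mul α₂)).add (hd3.const_mul α₃))
      simpa using this
    have hsum0' : Tendsto (fun n => dist (y (n + 1)) b₂ +
        (α₁ * dist (y n) b₂ + α₂ * dist (x n) b₁ + α₃ * dist (y n) b₂)) atTop (𝓝 0) := by
      have := (hd2.comp (tendsto_add_atTop_nat 1)).add
        (((hd2.const_mul α₁).add (hd1.const_mul α₂)).add (hd2.const_mul α₃))
      simpa using this
    have hsum0'' : Tendsto (fun n => dist (z (n + 1)) b₃ +
        (α₁ * dist (z n) b₃ + α₂ * dist (y n) b₂ + α₃ * dist (x n) b₁)) atTop (𝓝 0) := by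
      have := (hd3.comp (tendsto_add_atTop_nat 1)).add
        (((hd3.const_mul α₁).add (hd2.const_mul α₂)).add (hd1.const_mul α₃))
      simpa using this
    have hb1 : dist b₁ (F b₁ b₂ b₃) ≤ 0 := by
      refine le_of_tendsto_of_tendsto' tendsto_const_nhds hsum0 fun n => ?_
      calc dist b₁ (F b₁ b₂ b₃) ≤ dist b₁ (x (n + 1)) + dist (x (n + 1)) (F b₁ b₂ b₃) :=
            dist_triangle _ _ _
        _ ≤ dist b₁ (x (n + 1)) +
            (α₁ * dist (x n) b₁ + α₂ * dist (y n) b₂ + α₃ * dist (z n) b₃) := by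
            gcongr
            rw [hxs n]
            exact hcontr _ _ _ _ _ _ (hxb n) (hyb n) (hzb n)
        _ = dist (x (n + 1)) b₁ +
            (α₁ * dist (x n) b₁ + α₂ * dist (y n) b₂ + α₃ * dist (z n) b₃) := by
            rw [dist_comm]
    have hb2 : dist b₂ (F b₂ b₁ b₂) ≤ 0 := by
      refine le_of_tendsto_of_tendsto' tendsto_const_nhds hsum0' fun n => ?_
      calc dist b₂ (F b₂ b₁ b₂) ≤ dist b₂ (y (n + 1)) + dist (y (n + 1)) (F b₂ b₁ b₂) :=
            dist_triangle _ _ _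
        _ ≤ dist b₂ (y (n + 1)) +
            (α₁ * dist b₂ (y n) + α₂ * dist b₁ (x n) + α₃ * dist b₂ (y n)) := by
            gcongr
            rw [hys n, dist_comm]
            exact hcontr _ _ _ _ _ _ (hyb n) (hxb n) (hyb n)
        _ = dist (y (n + 1)) b₂ +
            (α₁ * dist (y n) b₂ + α₂ * dist (x n) b₁ + α₃ * dist (y n) b₂) := by
            rw [dist_comm b₂ (y (n + 1)), dist_comm b₂ (y n), dist_comm b₁ (x n)]
    have hb3 : dist b₃ (F b₃ b₂ b₁) ≤ 0 := by
      refine le_of_tendsto_of_tendsto' tendsto_const_nhds hsum0'' fun n => ?_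
      calc dist b₃ (F b₃ b₂ b₁) ≤ dist b₃ (z (n + 1)) + dist (z (n + 1)) (F b₃ b₂ b₁) :=
            dist_triangle _ _ _
        _ ≤ dist b₃ (z (n + 1)) +
            (α₁ * dist (z n) b₃ + α₂ * dist (y n) b₂ + α₃ * dist (x n) b₁) := by
            gcongr
            rw [hzs n]
            exact hcontr _ _ _ _ _ _ (hzb n) (hyb n) (hxb n)
        _ = dist (z (n + 1)) b₃ +
            (α₁ * dist (z n) b₃ + α₂ * dist (y n) b₂ + α₃ * dist (x n) b₁) := by
            rw [dist_comm]
    exact ⟨eq_of_dist_eq_zero (le_antisymm hb1 dist_nonneg),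
      eq_of_dist_eq_zero (le_antisymm hb2 dist_nonneg),
      eq_of_dist_eq_zero (le_antisymm hb3 dist_nonneg)⟩
end

section
/- Let X be a nonempty set, q ≥ 1, and Δ : X × X → ℝ^q an ℝ^q-valued metric (componentwise nonnegative, Δ(x,y) = 0 iff x = y, componentwise triangle inequality, symmetric) such that every Δ-Cauchy sequence Δ-converges (Δ is complete). Let T : X → X satisfy Δ(Tx,Ty) ≤ A·Δ(x,y) componentwise for all x,y ∈ X, where A is a normal q×q matrix with nonnegative entries. Then T has a unique fixed point z ∈ X, and for every x ∈ X the orbit (Tⁿx)ₙ Δ-converges to z (Perov's theorem, obtained from the ordered version by taking the trivial quasi-order). -/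
open Filter Topology Matrix

/-!
Perov's theorem reduces to Banach's. If `A w < w` for a strictly positive `w`, the weighted
sup-distance `d(x, y) = maxᵢ Δ(x, y)ᵢ / wᵢ` is a complete metric inducing `Δ`-convergence, and
`Δ(x, y) ≤ d(x, y) • w` gives `d(Tx, Ty) ≤ maxᵢ (A w)ᵢ / wᵢ · d(x, y)`, a contraction.
-/

structure IsVectorMetric {X ι : Type*} (Δ : X → X → ι → ℝ) : Prop where
  nonneg : ∀ x y i, 0 ≤ Δ x y i
  eq_zero_iff : ∀ x y, Δ x y = 0 ↔ x = y
  triangle : ∀ x y z i, Δ x z i ≤ Δ x y i + Δ y z i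
  symm : ∀ x y, Δ x y = Δ y x

lemma Pi.zero_div {ι : Type*} (w : ι → ℝ) : 0 / w = 0 :=
  funext fun i => _root_.zero_div (w i)

section WeightedSupNorm

variable {ι : Type*} [Fintype ι] {v w : ι → ℝ}

lemma pi_norm_div_le_iff (hv : ∀ i, 0 ≤ v i) (hw : ∀ i, 0 < w i) {c : ℝ} (hc : 0 ≤ c) :
    ‖v / w‖ ≤ c ↔ ∀ i, v i ≤ c * w i := by
  rw [pi_norm_le_iff_of_nonneg hc]
  refine forall_congr' fun i => ?_
  rw [Pi.div_apply, Real.norm_of_nonneg (div_nonneg (hv i) (hw i).le), div_le_iff₀ (hw i)]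

lemma le_pi_norm_div_mul (hv : ∀ i, 0 ≤ v i) (hw : ∀ i, 0 < w i) (i : ι) :
    v i ≤ ‖v / w‖ * w i :=
  (pi_norm_div_le_iff hv hw (norm_nonneg _)).1 le_rfl i

lemma tendsto_pi_norm_div_zero_iff {α : Type*} {l : Filter α} {F : α → ι → ℝ}
    (hw : ∀ i, w i ≠ 0) :
    Tendsto (fun a => ‖F a / w‖) l (𝓝 0) ↔ Tendsto F l (𝓝 0) := by
  rw [← tendsto_zero_iff_norm_tendsto_zero]
  constructor
  · intro h
    have hF : F = fun a => F a / w * w := by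
      funext a i
      exact (div_mul_cancel₀ _ (hw i)).symm
    simpa [← hF] using h.mul_const w
  · intro h
    simpa [Pi.zero_div] using h.div_const w

end WeightedSupNorm

namespace IsVectorMetric

variable {X ι : Type*} [Fintype ι] {Δ : X → X → ι → ℝ} {w : ι → ℝ}

@[reducible] noncomputable def weightedMetricSpace (hΔ : IsVectorMetric Δ) (w : ι → ℝ)
    (hw : ∀ i, 0 < w i) : MetricSpace X where
  dist x y := ‖Δ x y / w‖
  dist_self x := by simp [(hΔ.eq_zero_iff x x).2 rfl, Pi.zero_div]
  dist_comm x y := by rw [hΔ.symm]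
  dist_triangle x y z := by
    rw [pi_norm_div_le_iff (hΔ.nonneg x z) hw (by positivity)]
    intro i
    have hxy := le_pi_norm_div_mul (hΔ.nonneg x y) hw i
    have hyz := le_pi_norm_div_mul (hΔ.nonneg y z) hw i
    linarith [hΔ.triangle x y z i]
  eq_of_dist_eq_zero {x y} h := by
    refine (hΔ.eq_zero_iff x y).1 (funext fun i => le_antisymm ?_ (hΔ.nonneg x y i))
    simpa [h] using le_pi_norm_div_mul (hΔ.nonneg x y) hw i

variable (hΔ : IsVectorMetric Δ) (hw : ∀ i, 0 < w i)
include hΔ hw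

lemma tendsto_dist_zero_iff {α : Type*} {l : Filter α} {f g : α → X} :
    letI := hΔ.weightedMetricSpace w hw
    Tendsto (fun a => dist (f a) (g a)) l (𝓝 0) ↔ Tendsto (fun a => Δ (f a) (g a)) l (𝓝 0) :=
  tendsto_pi_norm_div_zero_iff fun i => (hw i).ne'

lemma completeSpace
    (hcomplete : ∀ u : ℕ → X, Tendsto (fun p : ℕ × ℕ => Δ (u p.1) (u p.2)) atTop (𝓝 0) →
      ∃ x, Tendsto (fun n => Δ (u n) x) atTop (𝓝 0)) :
    letI := hΔ.weightedMetricSpace w hw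
    CompleteSpace X := by
  let := hΔ.weightedMetricSpace w hw
  refine Metric.complete_of_cauchySeq_tendsto fun u hu => ?_
  rw [cauchySeq_iff_tendsto_dist_atTop_0, hΔ.tendsto_dist_zero_iff hw] at hu
  obtain ⟨x, hx⟩ := hcomplete u hu
  exact ⟨x, tendsto_iff_dist_tendsto_zero.2 ((hΔ.tendsto_dist_zero_iff hw).2 hx)⟩

lemma contractingWith {T : X → X} {A : Matrix ι ι ℝ} (hA : ∀ i j, 0 ≤ A i j)
    (hAw : ∀ i, (A *ᵥ w) i < w i) (hcontr : ∀ x y i, Δ (T x) (T y) i ≤ (A *ᵥ Δ x y) i) :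
    letI := hΔ.weightedMetricSpace w hw
    ContractingWith ‖A *ᵥ w / w‖₊ T := by
  let := hΔ.weightedMetricSpace w hw
  have hAw_nonneg (i : ι) : 0 ≤ (A *ᵥ w) i :=
    dotProduct_nonneg_of_nonneg (hA i) fun j => (hw j).le
  refine ⟨?_, LipschitzWith.of_dist_le_mul fun x y => ?_⟩
  · rw [← NNReal.coe_lt_coe, coe_nnnorm, NNReal.coe_one, pi_norm_lt_iff one_pos]
    intro i
    rw [Pi.div_apply, Real.norm_of_nonneg (div_nonneg (hAw_nonneg i) (hw i).le),
      div_lt_one (hw i)]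
    exact hAw i
  · change ‖Δ (T x) (T y) / w‖ ≤ ‖A *ᵥ w / w‖ * ‖Δ x y / w‖
    rw [pi_norm_div_le_iff (hΔ.nonneg _ _) hw (by positivity)]
    intro i
    have hΔ_le : Δ x y ≤ ‖Δ x y / w‖ • w := fun j => le_pi_norm_div_mul (hΔ.nonneg x y) hw j
    calc Δ (T x) (T y) i ≤ (A *ᵥ Δ x y) i := hcontr x y i
      _ ≤ (A *ᵥ (‖Δ x y / w‖ • w)) i := dotProduct_le_dotProduct_of_nonneg_left hΔ_le (hA i)
      _ = ‖Δ x y / w‖ * (A *ᵥ w) i := by rw [mulVec_smul, Pi.smul_apply, smul_eq_mul]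
      _ ≤ ‖Δ x y / w‖ * (‖A *ᵥ w / w‖ * w i) := by
        gcongr
        exact le_pi_norm_div_mul hAw_nonneg hw i
      _ = ‖A *ᵥ w / w‖ * ‖Δ x y / w‖ * w i := by ring

end IsVectorMetric

theorem stmt15_general {X : Type*} [Nonempty X] (q : ℕ)
    (Δ : X → X → (Fin q → ℝ))
    (hpos : ∀ x y i, 0 ≤ Δ x y i)
    (hreflsuf : ∀ x y, Δ x y = 0 ↔ x = y)
    (htri : ∀ x y z i, Δ x z i ≤ Δ x y i + Δ y z i)
    (hsym : ∀ x y, Δ x y = Δ y x)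
    (hcomplete : ∀ u : ℕ → X,
      Tendsto (fun p : ℕ × ℕ => Δ (u p.1) (u p.2)) atTop (𝓝 0) →
      ∃ x, Tendsto (fun n => Δ (u n) x) atTop (𝓝 0))
    (T : X → X)
    (A : Matrix (Fin q) (Fin q) ℝ) (hA : ∀ i j, 0 ≤ A i j)
    (hnormal : ∃ z : Fin q → ℝ, (∀ i, 0 < z i) ∧ ∀ i, A.mulVec z i < z i)
    (hcontr : ∀ x y : X, ∀ i, Δ (T x) (T y) i ≤ A.mulVec (Δ x y) i) :
    ∃ z : X, T z = z ∧ (∀ w : X, T w = w → w = z) ∧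
      ∀ x : X, Tendsto (fun n => Δ (T^[n] x) z) atTop (𝓝 0) := by
  obtain ⟨w, hw, hAw⟩ := hnormal
  have hΔ : IsVectorMetric Δ := ⟨hpos, hreflsuf, htri, hsym⟩
  let := hΔ.weightedMetricSpace w hw
  have := hΔ.completeSpace hw hcomplete
  have hT := hΔ.contractingWith hw hA hAw hcontr
  refine ⟨ContractingWith.fixedPoint T hT, hT.fixedPoint_isFixedPt,
    fun y hy => hT.fixedPoint_unique hy, fun x => ?_⟩
  exact (hΔ.tendsto_dist_zero_iff hw).1
    (tendsto_iff_dist_tendsto_zero.1 (hT.tendsto_iterate_fixedPoint x))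

/-- Perov's theorem: for a complete `ℝ^q`-valued metric `Δ` and a map `T` which is
`A`-contractive for a normal nonnegative matrix `A`, `T` has a unique fixed point `z`
and every orbit `Δ`-converges to `z`. -/
theorem stmt15 {X : Type*} [Nonempty X] (q : ℕ) (hq : 1 ≤ q)
    (Δ : X → X → (Fin q → ℝ))
    (hpos : ∀ x y i, 0 ≤ Δ x y i)
    (hreflsuf : ∀ x y, Δ x y = 0 ↔ x = y)
    (htri : ∀ x y z i, Δ x z i ≤ Δ x y i + Δ y z i)
    (hsym : ∀ x y, Δ x y = Δ y x)
    (hcomplete : ∀ u : ℕ → X,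
      Tendsto (fun p : ℕ × ℕ => Δ (u p.1) (u p.2)) atTop (𝓝 0) →
      ∃ x, Tendsto (fun n => Δ (u n) x) atTop (𝓝 0))
    (T : X → X)
    (A : Matrix (Fin q) (Fin q) ℝ) (hA : ∀ i j, 0 ≤ A i j)
    (hnormal : ∃ z : Fin q → ℝ, (∀ i, 0 < z i) ∧ ∀ i, A.mulVec z i < z i)
    (hcontr : ∀ x y : X, ∀ i, Δ (T x) (T y) i ≤ A.mulVec (Δ x y) i) :
    ∃ z : X, T z = z ∧ (∀ w : X, T w = w → w = z) ∧
      ∀ x : X, Tendsto (fun n => Δ (T^[n] x) z) atTop (𝓝 0) :=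
  stmt15_general q Δ hpos hreflsuf htri hsym hcomplete T A hA hnormal hcontr
end
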